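/- arXiv:1705.00667 — 6 statements merged into one kernel-verified Lean document; each statement's English description precedes it below -/
import Mathlib

section
/- Define τ : ℝ → ℝ by: τ(x) = 0 for x ≤ 0; τ(x) = x for 0 ≤ x ≤ π/2; τ(x) = −x + Nπ/2 for (N−1)π/2 ≤ x ≤ (N+1)π/2 when N is a positive integer with N ≡ 2 (mod 4); and τ(x) = x − Nπ/2 for (N−1)π/2 ≤ x ≤ (N+1)π/2 when N is a positive integer with N ≡ 0 (mod 4). Then: (i) |τ(x) − τ(y)| ≤ |x − y| for all x, y ∈ ℝ; (ii) for Re s > 0 one has ∫₀^∞ τ(x) e^{−sx} dx = (1 − e^{−πs/2})² / (s²(1 + e^{−πs})), and the right-hand side extends to an analytic function on the open strip {s ∈ ℂ : |Im s| < 1} (the singularity at s = 0 being removable); (iii) limsup_{x→∞} |τ(x)| = π/2. -/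
/-!
On `x ≥ 0` the zig-zag is the triangle wave `π/2 - dist(x, π/2 + 2πℤ)`, so it is 1-Lipschitz,
bounded by `π/2`, and equal to `π/2` at the peaks `π/2 + 2πm`, which gives the `limsup`. It is
antiperiodic, `τ(x + π) = -τ(x)`, so its Laplace transform is the integral over one period `[0, π]`
divided by `1 + e^{-πs}`. The zeros of `1 + e^{-πs}` are the odd multiples of `i`, and the double
zero of `s²` cancels against `(1 - e^{-πs/2})²`, so the transform extends to `|Im s| < 1`.
-/

open MeasureTheory Filter Real Set Metric
open scoped Complex

lemma exists_nat_abs_sub_mul_le {x p : ℝ} (hx : 0 ≤ x) (hp : 0 < p) :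
    ∃ k : ℕ, |x - k * p| ≤ p / 2 := by
  set k := ⌊x / p + 1 / 2⌋₊
  have hxp : x / p * p = x := div_mul_cancel₀ x hp.ne'
  have hlo : k ≤ x / p + 1 / 2 := Nat.floor_le (by positivity)
  have hhi : x / p + 1 / 2 < k + 1 := Nat.lt_floor_add_one _
  refine ⟨k, abs_le.2 ⟨?_, ?_⟩⟩ <;> nlinarith

lemma infDist_range_add_mul_eq_abs_sub {a d x : ℝ} {m : ℤ} (hd : 0 < d)
    (hx : |x - (a + d * m)| ≤ d / 2) :
    infDist x (range fun j : ℤ => a + d * j) = |x - (a + d * m)| := by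
  refine le_antisymm ?_ ((le_infDist (range_nonempty _)).2 ?_)
  · exact infDist_le_dist_of_mem ⟨m, rfl⟩
  · rintro _ ⟨j, rfl⟩
    rw [Real.dist_eq]
    rcases eq_or_ne j m with rfl | hjm
    · exact le_rfl
    have hsep : d ≤ |(a + d * j) - (a + d * m)| := by
      have : (1 : ℝ) ≤ |((j - m : ℤ) : ℝ)| := by
        rw [← Int.cast_abs]; exact_mod_cast Int.one_le_abs (sub_ne_zero.2 hjm)
      rw [show (a + d * j) - (a + d * m) = d * ((j - m : ℤ) : ℝ) by push_cast; ring, abs_mul,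
        abs_of_pos hd]
      nlinarith
    have := abs_sub_le (a + d * j) x (a + d * m)
    rw [abs_sub_comm (a + d * j) x] at this
    linarith

lemma integral_linear_mul_cexp_neg {s : ℂ} (hs : s ≠ 0) (c d : ℂ) (a b : ℝ) :
    ∫ x in a..b, (c + d * x) * cexp (-(s * x)) =
      cexp (-(s * b)) * (-(c + d * b) / s - d / s ^ 2)
        - cexp (-(s * a)) * (-(c + d * a) / s - d / s ^ 2) := by
  have hderiv (x : ℝ) : HasDerivAt (fun y : ℝ => cexp (-(s * y)) * (-(c + d * y) / s - d / s ^ 2))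
      ((c + d * x) * cexp (-(s * x))) x := by
    have hlin : HasDerivAt (fun y : ℂ => -(s * y)) (-s) x := by
      simpa using ((hasDerivAt_id (x : ℂ)).const_mul s).fun_neg
    have hpoly : HasDerivAt (fun y : ℂ => -(c + d * y) / s - d / s ^ 2) (-d / s) x := by
      simpa using ((((hasDerivAt_id (x : ℂ)).const_mul d).const_add c).neg.div_const s).sub_const
        (d / s ^ 2)
    refine (hlin.comp_ofReal.cexp.mul hpoly.comp_ofReal).congr_deriv ?_
    field_simp
    ring
  exact intervalIntegral.integral_eq_sub_of_hasDerivAt (fun x _ => hderiv x)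
    (Continuous.intervalIntegrable (by fun_prop) a b)

lemma one_add_cexp_mul_integral_Ioi_of_antiperiodic {f : ℝ → ℂ} {p : ℝ} {s : ℂ} (hp : 0 ≤ p)
    (hf : ∀ x, 0 < x → f (x + p) = -f x)
    (hint : IntegrableOn (fun x : ℝ => f x * cexp (-(s * x))) (Ioi 0)) :
    (1 + cexp (-(s * p))) * ∫ x in Ioi 0, f x * cexp (-(s * x)) =
      ∫ x in 0..p, f x * cexp (-(s * x)) := by
  set g : ℝ → ℂ := fun x => f x * cexp (-(s * x))
  have hsplit : ∫ x in Ioi 0, g x = (∫ x in 0..p, g x) + ∫ x in Ioi p, g x := by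
    rw [intervalIntegral.integral_of_le hp, ← setIntegral_union (Ioc_disjoint_Ioi le_rfl)
      measurableSet_Ioi (hint.mono_set Ioc_subset_Ioi_self) (hint.mono_set (Ioi_subset_Ioi hp)),
      Ioc_union_Ioi_eq_Ioi hp]
  have hshift : ∫ x in Ioi p, g x = ∫ x in Ioi 0, g (x + p) := by
    have h := (measurePreserving_add_right volume p).setIntegral_preimage_emb
      (measurableEmbedding_addRight p) g (Ioi p)
    rwa [preimage_add_const_Ioi, sub_self, eq_comm] at h
  have hflip : ∫ x in Ioi 0, g (x + p) = -cexp (-(s * p)) * ∫ x in Ioi 0, g x := by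
    rw [← integral_const_mul]
    refine setIntegral_congr_fun measurableSet_Ioi fun x hx => ?_
    simp only [g, hf x hx, Complex.ofReal_add, mul_add, neg_add, Complex.exp_add]
    ring
  rw [hshift, hflip] at hsplit
  linear_combination hsplit

lemma exists_int_eq_of_one_add_cexp_neg_pi_mul_eq_zero {z : ℂ} (h : 1 + cexp (-(π * z)) = 0) :
    ∃ n : ℤ, z = (2 * n + 1) * Complex.I := by
  have hone : cexp (-(π * z) + π * Complex.I) = 1 := by
    rw [Complex.exp_add, Complex.exp_pi_mul_I]; linear_combination -h
  obtain ⟨n, hn⟩ := Complex.exp_eq_one_iff.1 hone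
  refine ⟨-n, mul_left_cancel₀ (Complex.ofReal_ne_zero.2 pi_ne_zero) ?_⟩
  push_cast
  linear_combination -hn

lemma limsup_eq_of_le_of_frequently_le {α β : Type*} [ConditionallyCompleteLinearOrder β]
    {l : Filter α} {f : α → β} {c : β} (hle : ∀ x, f x ≤ c) (hfreq : ∃ᶠ x in l, c ≤ f x) :
    limsup f l = c :=
  le_antisymm
    (limsup_le_of_le (IsCoboundedUnder.of_frequently_ge hfreq) (Eventually.of_forall hle))
    (le_limsup_of_frequently_le hfreq (isBoundedUnder_of ⟨c, hle⟩))

/-- On the `k`-th tooth `|x - kπ| ≤ π/2` the graph is the line of slope `(-1)^k` through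
`(kπ, 0)`; the tooth indexed by `N` in the paper is the one with `N = 2k`. -/
structure IsZigzag (τ : ℝ → ℝ) : Prop where
  eq_zero_of_nonpos : ∀ x ≤ 0, τ x = 0
  eq_of_abs_sub_le : ∀ (k : ℕ) (x : ℝ), 0 ≤ x → |x - k * π| ≤ π / 2 → τ x = (-1) ^ k * (x - k * π)

namespace IsZigzag

variable {τ : ℝ → ℝ}

lemma of_pieces (hτ0 : ∀ x : ℝ, x ≤ 0 → τ x = 0)
    (hτ1 : ∀ x : ℝ, 0 ≤ x → x ≤ π / 2 → τ x = x)
    (hτ2 : ∀ N : ℕ, 0 < N → N % 4 = 2 → ∀ x : ℝ,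
      ((N : ℝ) - 1) * (π / 2) ≤ x → x ≤ ((N : ℝ) + 1) * (π / 2) → τ x = -x + N * (π / 2))
    (hτ3 : ∀ N : ℕ, 0 < N → N % 4 = 0 → ∀ x : ℝ,
      ((N : ℝ) - 1) * (π / 2) ≤ x → x ≤ ((N : ℝ) + 1) * (π / 2) → τ x = x - N * (π / 2)) :
    IsZigzag τ := by
  refine ⟨hτ0, fun k x hx hk => ?_⟩
  obtain ⟨hlo, hhi⟩ := abs_le.1 hk
  have hcast : ((2 * k : ℕ) : ℝ) * (π / 2) = k * π := by push_cast; ring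
  rcases Nat.even_or_odd k with heven | hodd
  · rw [heven.neg_one_pow, one_mul]
    rcases Nat.eq_zero_or_pos k with rfl | hk0
    · simpa using hτ1 x hx (by simpa using hhi)
    have hN : 2 * k % 4 = 0 := by obtain ⟨j, rfl⟩ := heven; omega
    rw [hτ3 (2 * k) (by omega) hN x (by push_cast; linarith) (by push_cast; linarith), hcast]
  · have hN : 2 * k % 4 = 2 := by obtain ⟨j, rfl⟩ := hodd; omega
    rw [hodd.neg_one_pow, hτ2 (2 * k) (by omega) hN x (by push_cast; linarith)
      (by push_cast; linarith), hcast]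
    ring

variable (hτ : IsZigzag τ)
include hτ

lemma abs_le_pi_div_two (x : ℝ) : |τ x| ≤ π / 2 := by
  rcases le_total x 0 with hx | hx
  · rw [hτ.eq_zero_of_nonpos x hx, abs_zero]; positivity
  · obtain ⟨k, hk⟩ := exists_nat_abs_sub_mul_le hx pi_pos
    rwa [hτ.eq_of_abs_sub_le k x hx hk, abs_mul, abs_pow, abs_neg, abs_one, one_pow, one_mul]

lemma add_pi {x : ℝ} (hx : 0 ≤ x) : τ (x + π) = -τ x := by
  obtain ⟨k, hk⟩ := exists_nat_abs_sub_mul_le hx pi_pos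
  have hk' : |x + π - (k + 1 : ℕ) * π| ≤ π / 2 := by push_cast; convert hk using 2; ring
  rw [hτ.eq_of_abs_sub_le (k + 1) _ (by positivity) hk', hτ.eq_of_abs_sub_le k x hx hk]
  push_cast
  ring

lemma apply_pi_div_two_add_two_pi_mul (m : ℕ) : τ (π / 2 + 2 * π * m) = π / 2 := by
  have hm : |π / 2 + 2 * π * m - (2 * m : ℕ) * π| ≤ π / 2 := by
    push_cast; rw [show π / 2 + 2 * π * m - 2 * m * π = π / 2 by ring, abs_of_pos (by positivity)]
  rw [hτ.eq_of_abs_sub_le (2 * m) _ (by positivity) hm, pow_mul, neg_one_sq, one_pow, one_mul]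
  push_cast
  ring

lemma eq_pi_div_two_sub_infDist (x : ℝ) :
    τ x = π / 2 - infDist (max x 0) (range fun j : ℤ => π / 2 + 2 * π * j) := by
  have hπ := pi_pos
  rcases le_total x 0 with hx | hx
  · have h0 : |0 - (π / 2 + 2 * π * ((0 : ℤ) : ℝ))| = π / 2 := by
      rw [Int.cast_zero, abs_of_nonpos (by linarith)]; ring
    rw [hτ.eq_zero_of_nonpos x hx, max_eq_right hx,
      infDist_range_add_mul_eq_abs_sub two_pi_pos (h0.trans_le (by linarith)), h0, sub_self]
  obtain ⟨k, hk⟩ := exists_nat_abs_sub_mul_le hx hπ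
  obtain ⟨lo, hi⟩ := abs_le.1 hk
  rw [hτ.eq_of_abs_sub_le k x hx hk, max_eq_left hx]
  obtain ⟨m, rfl | rfl⟩ := Nat.even_or_odd' k
  · have hd : |x - (π / 2 + 2 * π * ((m : ℤ) : ℝ))| = π / 2 - (x - (2 * m : ℕ) * π) := by
      push_cast; rw [abs_of_nonpos (by push_cast at hi; linarith)]; ring
    rw [infDist_range_add_mul_eq_abs_sub two_pi_pos (by rw [hd]; push_cast at lo ⊢; linarith),
      hd, pow_mul, neg_one_sq, one_pow]
    ring
  · have hd : |x - (π / 2 + 2 * π * ((m : ℤ) : ℝ))| = x - (2 * m + 1 : ℕ) * π + π / 2 := by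
      push_cast; rw [abs_of_nonneg (by push_cast at lo; linarith)]; ring
    rw [infDist_range_add_mul_eq_abs_sub two_pi_pos (by rw [hd]; push_cast at hi ⊢; linarith),
      hd, pow_succ, pow_mul, neg_one_sq, one_pow]
    ring

lemma lipschitzWith : LipschitzWith 1 τ := by
  have h := (lipschitz_infDist_pt (range fun j : ℤ => π / 2 + 2 * π * j)).comp
    (LipschitzWith.id.max_const 0)
  refine LipschitzWith.of_dist_le_mul fun x y => ?_
  rw [hτ.eq_pi_div_two_sub_infDist x, hτ.eq_pi_div_two_sub_infDist y, Real.dist_eq,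
    sub_sub_sub_cancel_left, ← Real.dist_eq, dist_comm]
  simpa using h.dist_le_mul x y

lemma integral_zero_pi_mul_cexp_neg {s : ℂ} (hs : s ≠ 0) :
    ∫ x in (0 : ℝ)..π, (τ x : ℂ) * cexp (-(s * x)) = (1 - cexp (-(π * s / 2))) ^ 2 / s ^ 2 := by
  have hπ := pi_pos
  have hcont : Continuous fun x : ℝ => (τ x : ℂ) * cexp (-(s * x)) := by
    have := hτ.lipschitzWith.continuous; fun_prop
  have hrise : ∫ x in (0 : ℝ)..π / 2, (τ x : ℂ) * cexp (-(s * x)) =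
      ∫ x in (0 : ℝ)..π / 2, (0 + 1 * (x : ℂ)) * cexp (-(s * x)) := by
    refine intervalIntegral.integral_congr fun x hx => ?_
    rw [uIcc_of_le (by positivity)] at hx
    have hk : |x - (0 : ℕ) * π| ≤ π / 2 := by simpa [abs_of_nonneg hx.1] using hx.2
    simp [hτ.eq_of_abs_sub_le 0 x hx.1 hk]
  have hfall : ∫ x in π / 2..π, (τ x : ℂ) * cexp (-(s * x)) =
      ∫ x in π / 2..π, ((π : ℂ) + -1 * (x : ℂ)) * cexp (-(s * x)) := by
    refine intervalIntegral.integral_congr fun x hx => ?_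
    obtain ⟨hlo, hhi⟩ : π / 2 ≤ x ∧ x ≤ π := by rwa [uIcc_of_le (by linarith)] at hx
    have hk : |x - (1 : ℕ) * π| ≤ π / 2 := abs_le.2 ⟨by push_cast; linarith, by push_cast; linarith⟩
    simp only [hτ.eq_of_abs_sub_le 1 x (by linarith) hk]
    push_cast
    ring
  rw [← intervalIntegral.integral_add_adjacent_intervals (b := π / 2)
      (hcont.intervalIntegrable _ _) (hcont.intervalIntegrable _ _), hrise, hfall,
    integral_linear_mul_cexp_neg hs, integral_linear_mul_cexp_neg hs]
  have h0 : cexp (-(s * ((0 : ℝ) : ℂ))) = 1 := by simp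
  have h1 : cexp (-(s * ((π / 2 : ℝ) : ℂ))) = cexp (-(π * s / 2)) := by push_cast; ring_nf
  have h2 : cexp (-(s * (π : ℂ))) = cexp (-(π * s / 2)) ^ 2 := by
    rw [← Complex.exp_nat_mul]; push_cast; ring_nf
  rw [h0, h1, h2]
  field_simp
  push_cast
  ring

lemma integrableOn_mul_cexp_neg {s : ℂ} (hs : 0 < s.re) :
    IntegrableOn (fun x : ℝ => (τ x : ℂ) * cexp (-(s * x))) (Ioi 0) := by
  have hexp := integrableOn_exp_mul_complex_Ioi (a := -s) (by simpa using hs) 0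
  simp only [neg_mul] at hexp
  refine hexp.bdd_mul (c := π / 2) ?_ (ae_of_all _ fun x => ?_)
  · exact (Complex.continuous_ofReal.comp hτ.lipschitzWith.continuous).aestronglyMeasurable
  · simpa using hτ.abs_le_pi_div_two x

lemma integral_Ioi_mul_cexp_neg {s : ℂ} (hs : 0 < s.re) :
    ∫ x in Ioi (0 : ℝ), (τ x : ℂ) * cexp (-(s * x)) =
      (1 - cexp (-(π * s / 2))) ^ 2 / (s ^ 2 * (1 + cexp (-(π * s)))) := by
  have hs0 : s ≠ 0 := by rintro rfl; simp at hs
  have hne : 1 + cexp (-(π * s)) ≠ 0 := fun h => by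
    obtain ⟨n, rfl⟩ := exists_int_eq_of_one_add_cexp_neg_pi_mul_eq_zero h
    simp at hs
  have hper := one_add_cexp_mul_integral_Ioi_of_antiperiodic pi_pos.le
    (fun x hx => by rw [hτ.add_pi hx.le, Complex.ofReal_neg]) (hτ.integrableOn_mul_cexp_neg hs)
  rw [hτ.integral_zero_pi_mul_cexp_neg hs0, mul_comm s, eq_div_iff (pow_ne_zero 2 hs0)] at hper
  rw [eq_div_iff (mul_ne_zero (pow_ne_zero 2 hs0) hne)]
  linear_combination hper

lemma limsup_abs : limsup (fun x => |τ x|) atTop = π / 2 := by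
  have hpeaks : Tendsto (fun m : ℕ => π / 2 + 2 * π * m) atTop atTop :=
    tendsto_atTop_add_const_left _ _
      (tendsto_natCast_atTop_atTop.const_mul_atTop two_pi_pos)
  refine limsup_eq_of_le_of_frequently_le (fun x => hτ.abs_le_pi_div_two x)
    (hpeaks.frequently (Frequently.of_forall fun m => ?_))
  rw [hτ.apply_pi_div_two_add_two_pi_mul m, abs_of_pos (by positivity)]

end IsZigzag

lemma exists_differentiableOn_strip_eq :
    ∃ F : ℂ → ℂ, DifferentiableOn ℂ F {s : ℂ | |s.im| < 1} ∧
      ∀ s : ℂ, |s.im| < 1 → s ≠ 0 →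
        F s = (1 - cexp (-(π * s / 2))) ^ 2 / (s ^ 2 * (1 + cexp (-(π * s)))) := by
  have hne {z : ℂ} (hz : |z.im| < 1) : 1 + cexp (-(π * z)) ≠ 0 := fun h => by
    obtain ⟨n, rfl⟩ := exists_int_eq_of_one_add_cexp_neg_pi_mul_eq_zero h
    obtain ⟨hlo, hhi⟩ := abs_lt.1 (by simpa using hz : |2 * (n : ℝ) + 1| < 1)
    have hlo' : -1 < 2 * n + 1 := by exact_mod_cast hlo
    have hhi' : 2 * n + 1 < 1 := by exact_mod_cast hhi
    omega
  have hdslope : Differentiable ℂ (dslope cexp 0) := fun z =>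
    ((Complex.differentiableOn_dslope univ_mem).2 Complex.differentiable_exp.differentiableOn z
      (mem_univ z)).differentiableAt univ_mem
  -- `(1 - e^{-πs/2}) / s = (π/2) · dslope exp 0 (-πs/2)`, and the right side is entire
  refine ⟨fun z => ((π / 2 : ℂ) * dslope cexp 0 (-(π * z / 2))) ^ 2 / (1 + cexp (-(π * z))),
    fun z hz => ?_, fun z _ hz0 => ?_⟩
  · exact ((((hdslope _).comp z (by fun_prop)).const_mul _).pow 2 |>.div (by fun_prop)
      (hne hz)).differentiableWithinAt
  · have hw : -(π * z / 2) ≠ 0 := by simp [hz0, pi_ne_zero]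
    dsimp only
    rw [dslope_of_ne _ hw, slope_def_field, Complex.exp_zero, ← div_div, ← div_pow]
    congr 2
    field_simp
    ring

/-- **The extremal example of Subsection 3.2 of the paper**: the zig-zag
function `τ` is 1-Lipschitz, its Laplace transform equals
`(1−e^{−πs/2})²/(s²(1+e^{−πs}))` on `Re s > 0` and extends analytically to
the strip `|Im s| < 1`, and `limsup_{x→∞} |τ(x)| = π/2`. -/
theorem extremal_example_optimality
    (τ : ℝ → ℝ)
    (hτ0 : ∀ x : ℝ, x ≤ 0 → τ x = 0)
    (hτ1 : ∀ x : ℝ, 0 ≤ x → x ≤ Real.pi / 2 → τ x = x)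
    (hτ2 : ∀ N : ℕ, 0 < N → N % 4 = 2 → ∀ x : ℝ,
      ((N : ℝ) - 1) * (Real.pi / 2) ≤ x → x ≤ ((N : ℝ) + 1) * (Real.pi / 2) →
      τ x = -x + (N : ℝ) * (Real.pi / 2))
    (hτ3 : ∀ N : ℕ, 0 < N → N % 4 = 0 → ∀ x : ℝ,
      ((N : ℝ) - 1) * (Real.pi / 2) ≤ x → x ≤ ((N : ℝ) + 1) * (Real.pi / 2) →
      τ x = x - (N : ℝ) * (Real.pi / 2)) :
    (∀ x y : ℝ, |τ x - τ y| ≤ |x - y|) ∧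
    (∀ s : ℂ, 0 < s.re →
      (IntegrableOn (fun x : ℝ => (τ x : ℂ) * Complex.exp (-(s * x))) (Set.Ioi 0)) ∧
      ∫ x in Set.Ioi (0:ℝ), (τ x : ℂ) * Complex.exp (-(s * x))
        = (1 - Complex.exp (-(Real.pi * s / 2))) ^ 2
          / (s ^ 2 * (1 + Complex.exp (-(Real.pi * s))))) ∧
    (∃ F : ℂ → ℂ, DifferentiableOn ℂ F {s : ℂ | |s.im| < 1} ∧
      ∀ s : ℂ, |s.im| < 1 → s ≠ 0 →
        F s = (1 - Complex.exp (-(Real.pi * s / 2))) ^ 2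
          / (s ^ 2 * (1 + Complex.exp (-(Real.pi * s))))) ∧
    Filter.limsup (fun x : ℝ => |τ x|) atTop = Real.pi / 2 := by
  have hτ : IsZigzag τ := .of_pieces hτ0 hτ1 hτ2 hτ3
  refine ⟨fun x y => ?_, fun s hs => ⟨hτ.integrableOn_mul_cexp_neg hs,
    hτ.integral_Ioi_mul_cexp_neg hs⟩, exists_differentiableOn_strip_eq, hτ.limsup_abs⟩
  simpa [Real.dist_eq] using hτ.lipschitzWith.dist_le_mul x y
end

section
/- Let K : ℝ → ℝ be defined by K(x) = 2cos(x)/(π² − 4x²) for x ≠ ±π/2, with K(±π/2) = 1/(2π). Then K ∈ L¹(ℝ) and its Fourier transform satisfies K̂(t) = ∫_ℝ e^{−ixt} K(x) dx = cos(πt/2) for |t| ≤ 1 and K̂(t) = 0 for |t| ≥ 1. -/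
/-!
The kernel is, up to the factor `2π` and the rescaling `x = 2πξ`, the Fourier transform (in
Mathlib's normalisation) of the even bump `g t = cos (π t / 2)` on `[-1, 1]`, `g = 0` outside:
integrating the two exponentials of `cos` over `[-1, 1]` gives
`2πK(x) = sinc (x - π/2) + sinc (x + π/2)`. Since `K` decays like `x⁻²` it is integrable, so
Fourier inversion applies to `g` and returns `g` itself as the transform of `K`.
-/

open MeasureTheory Filter

/-- The extremal kernel `K(x) = 2cos(x)/(π² − 4x²)`, extended continuously by
the value `1/(2π)` at its removable singularities `x = ±π/2`. -/
noncomputable def Kker (x : ℝ) : ℝ :=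
  if x = Real.pi / 2 ∨ x = -(Real.pi / 2) then 1 / (2 * Real.pi)
  else 2 * Real.cos x / (Real.pi ^ 2 - 4 * x ^ 2)

open Real FourierTransform Asymptotics

theorem integral_exp_mul_I_eq_two_mul_sinc (r : ℝ) :
    ∫ v in (-1 : ℝ)..1, Complex.exp (r * v * Complex.I) = 2 * sinc r := by
  rcases eq_or_ne r 0 with rfl | hr
  · norm_num
  have hc : (r : ℂ) * Complex.I ≠ 0 := mul_ne_zero (by exact_mod_cast hr) Complex.I_ne_zero
  simp_rw [mul_right_comm _ _ Complex.I]
  rw [integral_exp_mul_complex hc, sinc_of_ne_zero hr]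
  push_cast
  rw [Complex.sin]
  field_simp
  rw [Complex.I_sq]
  ring

theorem integral_exp_neg_I_mul_eq_fourier (h : ℝ → ℂ) (t : ℝ) :
    ∫ x : ℝ, Complex.exp (-(Complex.I * x * t)) * h x =
      𝓕 (fun ξ ↦ 2 * π * h (2 * π * ξ)) t := by
  set g : ℝ → ℂ := fun x ↦ Complex.exp (-(Complex.I * x * t)) * h x
  have hg (ξ : ℝ) :
      Complex.exp (↑(-2 * π * ξ * t) * Complex.I) • (2 * π * h (2 * π * ξ)) =
        (2 * π : ℝ) • g (2 * π * ξ) := by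
    simp only [g, smul_eq_mul, Complex.real_smul]
    push_cast
    ring_nf
  simp_rw [fourier_real_eq_integral_exp_smul, hg, integral_smul, Measure.integral_comp_mul_left,
    smul_smul, abs_of_pos (inv_pos.2 two_pi_pos), mul_inv_cancel₀ two_pi_pos.ne', one_smul]

theorem Kker_eq_sinc (x : ℝ) : Kker x = (sinc (x - π / 2) + sinc (x + π / 2)) / (2 * π) := by
  have hπ := pi_pos.ne'
  by_cases hx : x = π / 2 ∨ x = -(π / 2)
  · rw [Kker, if_pos hx]
    rcases hx with rfl | rfl
    · rw [sub_self, add_halves, sinc_zero, sinc_of_ne_zero hπ, sin_pi]; simp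
    · rw [neg_add_cancel, show -(π / 2) - π / 2 = -π by ring, sinc_neg, sinc_zero,
        sinc_of_ne_zero hπ, sin_pi]; simp
  · rw [Kker, if_neg hx]
    have h₁ : x - π / 2 ≠ 0 := fun h ↦ hx (.inl (by linarith))
    have h₂ : x + π / 2 ≠ 0 := fun h ↦ hx (.inr (by linarith))
    have h₃ : π ^ 2 - 4 * x ^ 2 ≠ 0 := by
      rw [show π ^ 2 - 4 * x ^ 2 = -4 * ((x - π / 2) * (x + π / 2)) by ring]
      exact mul_ne_zero (by norm_num) (mul_ne_zero h₁ h₂)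
    rw [sinc_of_ne_zero h₁, sinc_of_ne_zero h₂, sin_sub_pi_div_two, sin_add_pi_div_two,
      div_add_div _ _ h₁ h₂, div_div, div_eq_div_iff h₃ (by positivity)]
    ring

theorem continuous_Kker : Continuous Kker := by
  simp_rw [funext Kker_eq_sinc]
  fun_prop

theorem Kker_neg (x : ℝ) : Kker (-x) = Kker x := by
  rw [Kker_eq_sinc, Kker_eq_sinc, ← sinc_neg (-x - _), ← sinc_neg (-x + _)]
  ring_nf

theorem abs_Kker_le_inv_sq {x : ℝ} (hx : π ≤ |x|) : |Kker x| ≤ (x ^ 2)⁻¹ := by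
  have hπx : π ^ 2 ≤ x ^ 2 := by
    simpa only [sq_abs] using pow_le_pow_left₀ pi_pos.le hx 2
  have hne : ¬(x = π / 2 ∨ x = -(π / 2)) := by
    rintro (rfl | rfl) <;> nlinarith [pi_pos]
  have hd : 0 < 4 * x ^ 2 - π ^ 2 := by nlinarith [pi_pos]
  rw [Kker, if_neg hne, abs_div, ← abs_neg (π ^ 2 - _), neg_sub, abs_of_pos hd]
  calc |2 * cos x| / (4 * x ^ 2 - π ^ 2) ≤ 2 / (4 * x ^ 2 - π ^ 2) := by
        gcongr
        rw [abs_mul, abs_two]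
        linarith [abs_cos_le_one x]
    _ ≤ (x ^ 2)⁻¹ := by
        rw [div_le_iff₀ hd, ← div_eq_inv_mul, le_div_iff₀ (by nlinarith [pi_pos])]
        nlinarith

theorem Kker_isBigO_atTop : Kker =O[atTop] fun x ↦ x ^ (-2 : ℝ) := by
  refine IsBigO.of_bound 1 ?_
  filter_upwards [eventually_ge_atTop π] with x hx
  have hx₀ : 0 < x := pi_pos.trans_le hx
  simp only [one_mul, norm_eq_abs, rpow_neg hx₀.le, rpow_two, abs_inv, abs_pow, sq_abs]
  exact abs_Kker_le_inv_sq (hx.trans (le_abs_self x))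

theorem integrable_Kker : Integrable Kker :=
  continuous_Kker.locallyIntegrable.integrable_of_isBigO_atTop_of_norm_isNegInvariant
    (.of_forall fun x ↦ by simp [Kker_neg]) Kker_isBigO_atTop
    (integrableAtFilter_rpow_atTop_iff.2 (by norm_num))

noncomputable def cosBump (t : ℝ) : ℂ := if |t| ≤ 1 then (cos (π * t / 2) : ℂ) else 0

theorem cosBump_neg (t : ℝ) : cosBump (-t) = cosBump t := by
  simp only [cosBump, abs_neg, mul_neg, neg_div, cos_neg]

theorem cosBump_eq_zero {t : ℝ} (ht : 1 ≤ |t|) : cosBump t = 0 := by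
  rcases ht.eq_or_lt with h | h
  · have hcos : cos (π * |t| / 2) = 0 := by rw [← h, mul_one, cos_pi_div_two]
    rw [cosBump, if_pos h.ge, ← cos_abs, abs_div, abs_mul, abs_of_pos pi_pos, abs_two, hcos]
    simp
  · rw [cosBump, if_neg h.not_ge]

theorem continuous_cosBump : Continuous cosBump :=
  continuous_if_le continuous_abs continuous_const (by fun_prop) continuous_const.continuousOn
    fun t ht ↦ ((cosBump_eq_zero ht.ge).symm.trans (if_pos ht.le)).symm

theorem integrable_cosBump : Integrable cosBump :=
  continuous_cosBump.integrable_of_hasCompactSupport <|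
    HasCompactSupport.intro (isCompact_Icc (a := -1) (b := 1)) fun t ht ↦ cosBump_eq_zero <| by
      rw [Set.mem_Icc, ← abs_le] at ht; exact (not_le.1 ht).le

theorem fourier_cosBump (ξ : ℝ) : 𝓕 cosBump ξ = 2 * π * Kker (2 * π * ξ) := by
  have hsupp (v : ℝ) (hv : v ∉ Set.Icc (-1) 1) :
      Complex.exp (↑(-2 * π * v * ξ) * Complex.I) • cosBump v = 0 := by
    rw [Set.mem_Icc, ← abs_le, not_le] at hv
    rw [cosBump_eq_zero hv.le, smul_zero]
  have hexp : ∀ v ∈ Set.uIcc (-1 : ℝ) 1,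
      Complex.exp (↑(-2 * π * v * ξ) * Complex.I) • cosBump v
        = (Complex.exp (↑(π / 2 - 2 * π * ξ) * v * Complex.I)
          + Complex.exp (↑(-(π / 2) - 2 * π * ξ) * v * Complex.I)) / 2 := by
    intro v hv
    rw [Set.uIcc_of_le (by norm_num), Set.mem_Icc, ← abs_le] at hv
    rw [smul_eq_mul, cosBump, if_pos hv, Complex.ofReal_cos, Complex.cos, mul_div_assoc',
      mul_add, ← Complex.exp_add, ← Complex.exp_add]
    push_cast
    ring_nf
  rw [fourier_real_eq_integral_exp_smul, ← setIntegral_eq_integral_of_forall_compl_eq_zero hsupp,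
    integral_Icc_eq_integral_Ioc, ← intervalIntegral.integral_of_le (by norm_num),
    intervalIntegral.integral_congr hexp, intervalIntegral.integral_div,
    intervalIntegral.integral_add ((by fun_prop : Continuous _).intervalIntegrable _ _)
      ((by fun_prop : Continuous _).intervalIntegrable _ _), integral_exp_mul_I_eq_two_mul_sinc,
    integral_exp_mul_I_eq_two_mul_sinc, Kker_eq_sinc, ← sinc_neg (π / 2 - _),
    ← sinc_neg (-(π / 2) - _)]
  push_cast
  field_simp
  ring_nf

theorem integrable_fourier_cosBump : Integrable (𝓕 cosBump) := by
  rw [funext fourier_cosBump]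
  exact (integrable_Kker.comp_mul_left' (by positivity)).ofReal.const_mul _

theorem fourier_fourier_cosBump (t : ℝ) : 𝓕 (𝓕 cosBump) t = cosBump t := by
  have h := fourierInv_eq_fourier_neg (𝓕 cosBump) (-t)
  rwa [neg_neg, continuous_cosBump.fourierInv_fourier_eq integrable_cosBump
    integrable_fourier_cosBump, cosBump_neg, eq_comm] at h

/-- `K ∈ L¹(ℝ)` and its Fourier transform (with the paper's convention
`K̂(t) = ∫ e^{−ixt} K(x) dx`) is `cos(πt/2)` for `|t| ≤ 1` and `0` for
`|t| ≥ 1`. -/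
theorem kernel_fourier_transform :
    Integrable Kker ∧
    (∀ t : ℝ, |t| ≤ 1 →
      ∫ x : ℝ, Complex.exp (-(Complex.I * x * t)) * (Kker x : ℂ)
        = (Real.cos (Real.pi * t / 2) : ℂ)) ∧
    (∀ t : ℝ, 1 ≤ |t| →
      ∫ x : ℝ, Complex.exp (-(Complex.I * x * t)) * (Kker x : ℂ) = 0) := by
  have hK (t : ℝ) :
      ∫ x : ℝ, Complex.exp (-(Complex.I * x * t)) * (Kker x : ℂ) = cosBump t := by
    rw [integral_exp_neg_I_mul_eq_fourier, ← funext fourier_cosBump, fourier_fourier_cosBump]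
  exact ⟨integrable_Kker, fun t ht ↦ (hK t).trans (if_pos ht),
    fun t ht ↦ (hK t).trans (cosBump_eq_zero ht)⟩
end

section
/- Let K : ℝ → ℝ be defined by K(x) = 2cos(x)/(π² − 4x²) for x ≠ ±π/2, with K(±π/2) = 1/(2π). Then on the open interval (0, π/2) one has K'(x) < 0 and K''(x) < 0; in particular both K and the logarithmic derivative K'/K are decreasing on (0, π/2). -/
/-!
Write `g = π² - 4x²` and `h = g sin x - 8x cos x`. Then `K' = -2h/g²`, `h' = (g - 8) cos x` and
`K'' = -2(g h' + 16x h)/g³`. Since `h` vanishes at `0` and at `π/2` and `h'` changes sign exactly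
once in between, `h > 0`, so `K' < 0`. Where `g ≥ 8` both terms of `g h' + 16x h` are then
nonnegative. On the rest, in the variable `t = π/2 - x`, it vanishes to third order at `t = 0`, and
the Taylor bounds `sin t ≤ t - t³/6 + t⁵/120`, `cos t ≥ 1 - t²/2` reduce its positivity to a
polynomial inequality. Finally `(K'/K)' = (K''K - K'²)/K² < 0`.
-/

open MeasureTheory Filter

open Real Set

theorem le_of_hasDerivAt_le {f g f' g' : ℝ → ℝ} (hf : ∀ y, HasDerivAt f (f' y) y)
    (hg : ∀ y, HasDerivAt g (g' y) y) (h₀ : f 0 ≤ g 0) (hle : ∀ y, 0 ≤ y → f' y ≤ g' y)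
    {x : ℝ} (hx : 0 ≤ x) : f x ≤ g x :=
  image_le_of_deriv_right_le_deriv_boundary
    (fun y _ => (hf y).continuousAt.continuousWithinAt) (fun y _ => (hf y).hasDerivWithinAt)
    h₀ (fun y _ => (hg y).continuousAt.continuousWithinAt) (fun y _ => (hg y).hasDerivWithinAt)
    (fun y hy => hle y hy.1) ⟨hx, le_rfl⟩

theorem Real.cos_le_one_sub_sq_div_two_add {x : ℝ} (hx : 0 ≤ x) :
    cos x ≤ 1 - x ^ 2 / 2 + x ^ 4 / 24 := by
  refine le_of_hasDerivAt_le (g := fun y => 1 - y ^ 2 / 2 + y ^ 4 / 24)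
    (f' := fun y => -sin y) (g' := fun y => -y + y ^ 3 / 6) hasDerivAt_cos (fun y => ?_) ?_
    (fun y hy => ?_) hx
  · exact ((((hasDerivAt_pow 2 y).div_const 2).const_sub 1).add
      ((hasDerivAt_pow 4 y).div_const 24)).congr_deriv (by push_cast; ring)
  · norm_num
  · linarith [sin_ge_sub_cube hy]

theorem Real.sin_le_sub_cube_div_six_add {x : ℝ} (hx : 0 ≤ x) :
    sin x ≤ x - x ^ 3 / 6 + x ^ 5 / 120 := by
  refine le_of_hasDerivAt_le (g := fun y => y - y ^ 3 / 6 + y ^ 5 / 120) (f' := cos)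
    (g' := fun y => 1 - y ^ 2 / 2 + y ^ 4 / 24) hasDerivAt_sin (fun y => ?_) ?_
    (fun y hy => cos_le_one_sub_sq_div_two_add hy) hx
  · exact (((hasDerivAt_id y).sub ((hasDerivAt_pow 3 y).div_const 6)).add
      ((hasDerivAt_pow 5 y).div_const 120)).congr_deriv (by push_cast; ring)
  · norm_num

theorem strictAntiOn_of_deriv_neg_of_isOpen {D : Set ℝ} (hD : Convex ℝ D) (hDo : IsOpen D)
    {f : ℝ → ℝ} (hf' : ∀ x ∈ D, deriv f x < 0) : StrictAntiOn f D :=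
  strictAntiOn_of_deriv_neg hD
    (fun x hx => (differentiableAt_of_deriv_ne_zero (hf' x hx).ne).continuousAt.continuousWithinAt)
    (by simpa only [hDo.interior_eq] using hf')

theorem deriv_logDeriv_neg {f : ℝ → ℝ} {x : ℝ} (hf : DifferentiableAt ℝ f x)
    (hf' : DifferentiableAt ℝ (deriv f) x) (hpos : 0 < f x) (hf'' : deriv (deriv f) x < 0) :
    deriv (logDeriv f) x < 0 := by
  rw [logDeriv, deriv_div hf' hf hpos.ne']
  apply div_neg_of_neg_of_pos _ (by positivity)
  nlinarith [mul_self_nonneg (deriv f x), mul_neg_of_neg_of_pos hf'' hpos]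

namespace Kker

noncomputable def derivNum (x : ℝ) : ℝ := sin x * (π ^ 2 - 4 * x ^ 2) - 8 * x * cos x

noncomputable def secondDerivNum (x : ℝ) : ℝ :=
  (π ^ 2 - 4 * x ^ 2) * (cos x * (π ^ 2 - 8 - 4 * x ^ 2)) + 16 * x * derivNum x

theorem hasDerivAt_pi_sq_sub_four_mul_sq (x : ℝ) :
    HasDerivAt (fun y => π ^ 2 - 4 * y ^ 2) (-(8 * x)) x :=
  (((hasDerivAt_pow 2 x).const_mul 4).const_sub _).congr_deriv (by push_cast; ring)

theorem hasDerivAt_derivNum (x : ℝ) :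
    HasDerivAt derivNum (cos x * (π ^ 2 - 8 - 4 * x ^ 2)) x :=
  ((hasDerivAt_sin x).mul (hasDerivAt_pi_sq_sub_four_mul_sq x)).sub
    (((hasDerivAt_id x).const_mul 8).mul (hasDerivAt_cos x))
    |>.congr_deriv (by simp only [mul_neg, mul_one, id_eq]; ring)

theorem derivNum_pos {x : ℝ} (hx₀ : 0 < x) (hx : x < π / 2) : 0 < derivNum x := by
  have hcos : ∀ y ∈ Ioo 0 (π / 2), 0 < cos y := fun y hy =>
    cos_pos_of_mem_Ioo ⟨by linarith [hy.1, pi_pos], hy.2⟩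
  rcases le_or_gt (4 * x ^ 2) (π ^ 2 - 8) with hsmall | hlarge
  · have hmono : StrictMonoOn derivNum (Icc 0 x) := by
      refine strictMonoOn_of_deriv_pos (convex_Icc 0 x)
        (fun y _ => (hasDerivAt_derivNum y).continuousAt.continuousWithinAt) fun y hy => ?_
      rw [interior_Icc] at hy
      rw [(hasDerivAt_derivNum y).deriv]
      have : 4 * y ^ 2 < 4 * x ^ 2 := by nlinarith [hy.1, hy.2]
      exact mul_pos (hcos y ⟨hy.1, hy.2.trans hx⟩) (by linarith)
    have h_start : derivNum 0 = 0 := by simp [derivNum]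
    exact h_start ▸ hmono ⟨le_rfl, hx₀.le⟩ ⟨hx₀.le, le_rfl⟩ hx₀
  · have hanti : StrictAntiOn derivNum (Icc x (π / 2)) := by
      refine strictAntiOn_of_deriv_neg (convex_Icc x (π / 2))
        (fun y _ => (hasDerivAt_derivNum y).continuousAt.continuousWithinAt) fun y hy => ?_
      rw [interior_Icc] at hy
      rw [(hasDerivAt_derivNum y).deriv]
      have : 4 * x ^ 2 < 4 * y ^ 2 := by nlinarith [hy.1, hy.2]
      exact mul_neg_of_pos_of_neg (hcos y ⟨hx₀.trans hy.1, hy.2⟩) (by linarith)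
    have h_end : derivNum (π / 2) = 0 := by
      simp only [derivNum, sin_pi_div_two, cos_pi_div_two]; ring
    exact h_end ▸ hanti ⟨le_rfl, hx.le⟩ ⟨hx.le, le_rfl⟩ hx

theorem taylor_lower_bound_pos {t : ℝ} (ht₀ : 0 < t) (ht : t ≤ 0.89) :
    0 < (t - t ^ 3 / 6 + t ^ 5 / 120) * ((t * (π - t)) ^ 2 + 6 * (t * (π - t)) - 2 * π ^ 2)
      + 2 * (π - 2 * t) * (t * (π - t)) * (1 - t ^ 2 / 2) := by
  have hp₁ := pi_gt_d4
  have hp₂ := pi_lt_d4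
  have hq₁ : 9.869 < π ^ 2 := by nlinarith
  have hq₂ : π ^ 2 < 9.8697 := by nlinarith
  have h2 := pow_pos ht₀ 2
  have h3 := pow_pos ht₀ 3
  have h4 := pow_pos ht₀ 4
  have h5 := pow_pos ht₀ 5
  have hQ : 0 < (π ^ 2 / 3 - 2) - 11 * π ^ 2 / 60 * t ^ 2 + 23 * π / 60 * t ^ 3
      + (π ^ 2 - 26) / 120 * t ^ 4 - π / 60 * t ^ 5 + t ^ 6 / 120 := by
    nlinarith [mul_lt_mul_of_pos_right hq₁ h4, mul_lt_mul_of_pos_right hq₂ h2,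
      mul_lt_mul_of_pos_right hp₁ h3, mul_lt_mul_of_pos_right hp₂ h5,
      mul_nonneg h2.le (sub_nonneg.2 ht), mul_nonneg h3.le (sub_nonneg.2 ht),
      mul_nonneg h4.le (sub_nonneg.2 ht), pow_pos ht₀ 6]
  linear_combination mul_pos h3 hQ

theorem secondDerivNum_pi_div_two_sub (t : ℝ) :
    secondDerivNum (π / 2 - t) =
      16 * (sin t * ((t * (π - t)) ^ 2 + 6 * (t * (π - t)) - 2 * π ^ 2)
        + 2 * (π - 2 * t) * (t * (π - t)) * cos t) := by
  simp only [secondDerivNum, derivNum, sin_pi_div_two_sub, cos_pi_div_two_sub]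
  ring

theorem secondDerivNum_pos {x : ℝ} (hx₀ : 0 < x) (hx : x < π / 2) : 0 < secondDerivNum x := by
  rcases le_or_gt 8 (π ^ 2 - 4 * x ^ 2) with hlarge | hsmall
  · have hcos : 0 < cos x := cos_pos_of_mem_Ioo ⟨by linarith [pi_pos], hx⟩
    have hfirst : 0 ≤ (π ^ 2 - 4 * x ^ 2) * (cos x * (π ^ 2 - 8 - 4 * x ^ 2)) :=
      mul_nonneg (by linarith) (mul_nonneg hcos.le (by linarith))
    have hsecond : 0 < 16 * x * derivNum x := by have := derivNum_pos hx₀ hx; positivity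
    exact add_pos_of_nonneg_of_pos hfirst hsecond
  · obtain ⟨t, rfl⟩ : ∃ t, x = π / 2 - t := ⟨π / 2 - x, by ring⟩
    have ht₀ : 0 < t := by linarith
    have hu : t * (π - t) < 2 := by nlinarith
    have ht : t ≤ 0.89 := by nlinarith [pi_gt_d2]
    have hC : (t * (π - t)) ^ 2 + 6 * (t * (π - t)) - 2 * π ^ 2 < 0 := by
      nlinarith [pi_gt_three, mul_pos ht₀ (by linarith : 0 < π - t)]
    have hD : 0 ≤ 2 * (π - 2 * t) * (t * (π - t)) := by
      have : 0 < π - t := by linarith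
      have : 0 < π - 2 * t := by linarith
      positivity
    rw [secondDerivNum_pi_div_two_sub]
    linarith [taylor_lower_bound_pos ht₀ ht,
      mul_le_mul_of_nonpos_right (sin_le_sub_cube_div_six_add ht₀.le) hC.le,
      mul_le_mul_of_nonneg_left (one_sub_sq_div_two_le_cos (x := t)) hD]

theorem pi_sq_sub_four_mul_sq_pos {x : ℝ} (hx : x ∈ Ioo (-(π / 2)) (π / 2)) :
    0 < π ^ 2 - 4 * x ^ 2 := by
  nlinarith [mul_pos (sub_pos.2 hx.2) (neg_lt_iff_pos_add.1 hx.1)]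

theorem eqOn_Ioo :
    EqOn Kker (fun x => 2 * cos x / (π ^ 2 - 4 * x ^ 2)) (Ioo (-(π / 2)) (π / 2)) :=
  fun x hx => if_neg (by rintro (rfl | rfl) <;> linarith [hx.1, hx.2])

theorem pos {x : ℝ} (hx : x ∈ Ioo (-(π / 2)) (π / 2)) : 0 < Kker x := by
  rw [eqOn_Ioo hx]
  exact div_pos (mul_pos two_pos (cos_pos_of_mem_Ioo hx)) (pi_sq_sub_four_mul_sq_pos hx)

theorem hasDerivAt {x : ℝ} (hx : x ∈ Ioo (-(π / 2)) (π / 2)) :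
    HasDerivAt Kker (-2 * derivNum x / (π ^ 2 - 4 * x ^ 2) ^ 2) x := by
  have hg := (pi_sq_sub_four_mul_sq_pos hx).ne'
  refine HasDerivAt.congr_of_eventuallyEq ?_ (eventuallyEq_of_mem (isOpen_Ioo.mem_nhds hx) eqOn_Ioo)
  refine (((hasDerivAt_cos x).const_mul 2).div (hasDerivAt_pi_sq_sub_four_mul_sq x) hg)
    |>.congr_deriv ?_
  field_simp
  simp only [derivNum]
  ring

theorem hasDerivAt_deriv {x : ℝ} (hx : x ∈ Ioo (-(π / 2)) (π / 2)) :
    HasDerivAt (deriv Kker) (-2 * secondDerivNum x / (π ^ 2 - 4 * x ^ 2) ^ 3) x := by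
  have hg := (pi_sq_sub_four_mul_sq_pos hx).ne'
  refine HasDerivAt.congr_of_eventuallyEq ?_
    (eventuallyEq_of_mem (isOpen_Ioo.mem_nhds hx) fun y hy => (hasDerivAt hy).deriv)
  refine (((hasDerivAt_derivNum x).const_mul (-2)).div
    ((hasDerivAt_pi_sq_sub_four_mul_sq x).pow 2) (pow_ne_zero 2 hg)).congr_deriv ?_
  simp only [Pi.pow_apply]
  field_simp
  simp only [secondDerivNum]
  ring

end Kker

/-- **Lemma 3.2 of the paper**: on `(0, π/2)` one has `K' < 0` and
`K'' < 0`; in particular both `K` and `K'/K` are decreasing there. -/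
theorem kernel_concavity :
    (∀ x ∈ Set.Ioo (0:ℝ) (Real.pi / 2),
      deriv Kker x < 0 ∧ deriv (deriv Kker) x < 0) ∧
    StrictAntiOn Kker (Set.Ioo (0:ℝ) (Real.pi / 2)) ∧
    StrictAntiOn (fun x => deriv Kker x / Kker x) (Set.Ioo (0:ℝ) (Real.pi / 2)) := by
  have hI : Ioo 0 (π / 2) ⊆ Ioo (-(π / 2)) (π / 2) := Ioo_subset_Ioo_left (by linarith [pi_pos])
  have hK' : ∀ x ∈ Ioo 0 (π / 2), deriv Kker x < 0 := fun x hx => by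
    rw [(Kker.hasDerivAt (hI hx)).deriv]
    exact div_neg_of_neg_of_pos (by linarith [Kker.derivNum_pos hx.1 hx.2])
      (pow_pos (Kker.pi_sq_sub_four_mul_sq_pos (hI hx)) 2)
  have hK'' : ∀ x ∈ Ioo 0 (π / 2), deriv (deriv Kker) x < 0 := fun x hx => by
    rw [(Kker.hasDerivAt_deriv (hI hx)).deriv]
    exact div_neg_of_neg_of_pos (by linarith [Kker.secondDerivNum_pos hx.1 hx.2])
      (pow_pos (Kker.pi_sq_sub_four_mul_sq_pos (hI hx)) 3)
  refine ⟨fun x hx => ⟨hK' x hx, hK'' x hx⟩,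
    strictAntiOn_of_deriv_neg_of_isOpen (convex_Ioo _ _) isOpen_Ioo hK', ?_⟩
  show StrictAntiOn (logDeriv Kker) _
  exact strictAntiOn_of_deriv_neg_of_isOpen (convex_Ioo _ _) isOpen_Ioo fun x hx =>
    deriv_logDeriv_neg (Kker.hasDerivAt (hI hx)).differentiableAt
      (Kker.hasDerivAt_deriv (hI hx)).differentiableAt (Kker.pos (hI hx)) (hK'' x hx)
end

section
/- Let μ be a finite positive Borel measure on a compact interval [a,b], let φ : [a,b] → ℝ be non-increasing and bounded, and let f, g : [a,b] → ℝ be μ-integrable functions with ∫_{[a,b]} f dμ = ∫_{[a,b]} g dμ. Suppose there exists c ∈ [a,b] such that f(x) ≥ g(x) for all x ∈ [a,c] and f(x) ≤ g(x) for all x ∈ (c,b]. Then ∫_{[a,b]} f(x) φ(x) dμ(x) ≥ ∫_{[a,b]} g(x) φ(x) dμ(x). -/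
open MeasureTheory

/-!
Since `f` and `g` have the same integral, `∫ (f - g) φ = ∫ (f - g) (φ - φ c)`. The sign change of
`f - g` at `c` matches that of `φ - φ c` for antitone `φ`, so the last integrand is nonnegative.
-/

theorem setIntegral_mul_le_of_sub_mul_sub_nonneg {α : Type*} [MeasurableSpace α]
    {μ : Measure α} {s : Set α} (hs : MeasurableSet s) {f g φ : α → ℝ} (k : ℝ)
    (hf : IntegrableOn f s μ) (hg : IntegrableOn g s μ)
    (hfφ : IntegrableOn (fun x => f x * φ x) s μ) (hgφ : IntegrableOn (fun x => g x * φ x) s μ)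
    (hfg : ∫ x in s, f x ∂μ = ∫ x in s, g x ∂μ)
    (hsign : ∀ x ∈ s, 0 ≤ (f x - g x) * (φ x - k)) :
    ∫ x in s, g x * φ x ∂μ ≤ ∫ x in s, f x * φ x ∂μ := by
  have hdk : IntegrableOn (fun x => (f x - g x) * k) s μ := (hf.sub hg).mul_const k
  have hshift : ∫ x in s, (g x * φ x + (f x - g x) * k) ∂μ = ∫ x in s, g x * φ x ∂μ := by
    rw [integral_add hgφ hdk, integral_mul_const, integral_sub hf hg, hfg, sub_self, zero_mul,
      add_zero]
  rw [← hshift]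
  refine setIntegral_mono_on (hgφ.add hdk) hfφ hs fun x hx => ?_
  linarith [hsign x hx]

theorem MeasureTheory.IntegrableOn.mul_antitoneOn_Icc {μ : Measure ℝ} {a b : ℝ} {f φ : ℝ → ℝ}
    (hf : IntegrableOn f (Set.Icc a b) μ) (hφ : AntitoneOn φ (Set.Icc a b)) :
    IntegrableOn (fun x => f x * φ x) (Set.Icc a b) μ := by
  rcases le_or_gt a b with hab | hba
  · exact Integrable.mul_of_top_left hf
      (hφ.memLp_top (isLeast_Icc hab) (isGreatest_Icc hab) measurableSet_Icc)
  · simp [Set.Icc_eq_empty_of_lt hba]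

theorem sub_mul_sub_nonneg_of_antitoneOn_Icc {a b c : ℝ} {f g φ : ℝ → ℝ}
    (hφ : AntitoneOn φ (Set.Icc a b)) (hc : c ∈ Set.Icc a b)
    (h₁ : ∀ x ∈ Set.Icc a c, g x ≤ f x) (h₂ : ∀ x ∈ Set.Ioc c b, f x ≤ g x) :
    ∀ x ∈ Set.Icc a b, 0 ≤ (f x - g x) * (φ x - φ c) := by
  intro x hx
  rcases le_or_gt x c with hxc | hcx
  · exact mul_nonneg (sub_nonneg.2 (h₁ x ⟨hx.1, hxc⟩)) (sub_nonneg.2 (hφ hx hc hxc))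
  · exact mul_nonneg_of_nonpos_of_nonpos (sub_nonpos.2 (h₂ x ⟨hcx, hx.2⟩))
      (sub_nonpos.2 (hφ hc hx hcx.le))

theorem monotone_weight_comparison_general
    (a b : ℝ)
    (μ : Measure ℝ)
    (φ f g : ℝ → ℝ)
    (hφ : AntitoneOn φ (Set.Icc a b))
    (hf : IntegrableOn f (Set.Icc a b) μ)
    (hg : IntegrableOn g (Set.Icc a b) μ)
    (hfg : ∫ x in Set.Icc a b, f x ∂μ = ∫ x in Set.Icc a b, g x ∂μ)
    (c : ℝ) (hc : c ∈ Set.Icc a b)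
    (h₁ : ∀ x ∈ Set.Icc a c, g x ≤ f x)
    (h₂ : ∀ x ∈ Set.Ioc c b, f x ≤ g x) :
    ∫ x in Set.Icc a b, g x * φ x ∂μ ≤ ∫ x in Set.Icc a b, f x * φ x ∂μ :=
  setIntegral_mul_le_of_sub_mul_sub_nonneg measurableSet_Icc (φ c) hf hg
    (hf.mul_antitoneOn_Icc hφ) (hg.mul_antitoneOn_Icc hφ) hfg
    (sub_mul_sub_nonneg_of_antitoneOn_Icc hφ hc h₁ h₂)

/-- **Lemma 3.4 of the paper**: monotone weight comparison lemma.  If `f`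
and `g` have the same `μ`-integral over `[a,b]`, `f ≥ g` on `[a,c]` and
`f ≤ g` on `(c,b]`, and `φ` is non-increasing and bounded, then
`∫ f φ dμ ≥ ∫ g φ dμ`. -/
theorem monotone_weight_comparison
    (a b : ℝ) (hab : a ≤ b)
    (μ : Measure ℝ) [IsFiniteMeasure μ]
    (φ f g : ℝ → ℝ)
    (hφ : AntitoneOn φ (Set.Icc a b))
    (Cφ : ℝ) (hφbdd : ∀ x ∈ Set.Icc a b, |φ x| ≤ Cφ)
    (hf : IntegrableOn f (Set.Icc a b) μ)
    (hg : IntegrableOn g (Set.Icc a b) μ)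
    (hfg : ∫ x in Set.Icc a b, f x ∂μ = ∫ x in Set.Icc a b, g x ∂μ)
    (c : ℝ) (hc : c ∈ Set.Icc a b)
    (h₁ : ∀ x ∈ Set.Icc a c, g x ≤ f x)
    (h₂ : ∀ x ∈ Set.Ioc c b, f x ≤ g x) :
    ∫ x in Set.Icc a b, g x * φ x ∂μ ≤ ∫ x in Set.Icc a b, f x * φ x ∂μ :=
  monotone_weight_comparison_general a b μ φ f g hφ hf hg hfg c hc h₁ h₂
end

section
/- Let K : ℝ → ℝ be defined by K(x) = 2cos(x)/(π² − 4x²) for x ≠ ±π/2, with K(±π/2) = 1/(2π). Call z : [−π/2, π/2] → ℝ an upper pointed zig-zag function if there is c ∈ [−π/2, π/2] with z(x) = (x − c) + z(c) for x ∈ [−π/2, c] and z(x) = −(x − c) + z(c) for x ∈ [c, π/2]. Let I, s ∈ ℝ satisfy ∫_{−π/2}^{π/2} (s − (x + π/2)) K(x) dx ≤ I ≤ ∫_{−π/2}^{π/2} (s + (x + π/2)) K(x) dx. Let A be the set of functions f : [−π/2, π/2] → ℝ with |f(x) − f(y)| ≤ |x − y| for all x, y, f(−π/2) = s, and ∫_{−π/2}^{π/2}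 f(x) K(x) dx ≤ I; let B be the set of upper pointed zig-zag functions z with z(−π/2) ≤ s and ∫_{−π/2}^{π/2} z(x) K(x) dx = I. Then for every even integer N ≥ 2 (so that K(x + Nπ) < 0 on (−π/2, π/2)): inf_{f ∈ A} ∫_{−π/2}^{π/2} f(x) K(x + Nπ) dx ≥ inf_{z ∈ B} ∫_{−π/2}^{π/2} z(x) K(x + Nπ) dx. -/
open MeasureTheory Filter

/-- `z` is an upper pointed zig-zag function on `[−π/2, π/2]`. -/
def UpperPointedZigZag (z : ℝ → ℝ) : Prop :=
  ∃ c ∈ Set.Icc (-(Real.pi / 2)) (Real.pi / 2),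
    (∀ x ∈ Set.Icc (-(Real.pi / 2)) c, z x = (x - c) + z c) ∧
    (∀ x ∈ Set.Icc c (Real.pi / 2), z x = -(x - c) + z c)

/-!
It suffices to find, for each admissible `f`, an upper pointed zig-zag `z` with `∫ z K = I`,
`z (-π/2) ≤ s` and `∫ z K(· + Nπ) ≤ ∫ f K(· + Nπ)`; the zig-zag infimum is finite since
`K(· + Nπ) ≤ 0` on `[-π/2, π/2]` and the constraint `∫ z K = I` bounds `z` from above.
Every `z` found is a tent `x ↦ h - |x - c|`, compared with `f` through the 1-Lipschitz bound.

If the tent through `(-π/2, f (-π/2))` and `(π/2, f (π/2))` has `K`-integral at most `I`, slide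
its apex to the right while keeping its left end fixed: these tents dominate `f`, and by the
intermediate value theorem one of them has `K`-integral `I` (the last one is the line in the
upper bound for `I`). Otherwise take a Lagrange multiplier `l ∈ [0, l*]`. The weight
`-K(x + Nπ) - l K(x)` has the sign of a concave quadratic with roots `p₁(l) ≤ p₂(l)`, and the tent
through `(p₁, f p₁)` and `(p₂, f p₂)` lies above `f` between the roots and below it outside, so it
beats `f` by weak duality. Its `K`-integral moves continuously from that of the endpoint tent
(`l = 0`) to at most `∫ f K ≤ I` (`l = l*`, where the roots merge).
-/

open Real Set intervalIntegral

theorem LipschitzOnWith.le_add_abs_sub {f : ℝ → ℝ} {S : Set ℝ} (hf : LipschitzOnWith 1 f S)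
    {x y : ℝ} (hx : x ∈ S) (hy : y ∈ S) : f x ≤ f y + |x - y| := by
  simpa only [NNReal.coe_one, one_mul, Real.dist_eq] using hf.le_add_mul hx hy

namespace ZigZagReduction

local notation "J" => Icc (-(π / 2)) (π / 2)

theorem neg_pi_div_two_le_pi_div_two : -(π / 2) ≤ π / 2 := by linarith [pi_pos]

section Kernel

variable {x : ℝ}

theorem Kker_of_ne (h₁ : x ≠ π / 2) (h₂ : x ≠ -(π / 2)) :
    Kker x = 2 * cos x / (π ^ 2 - 4 * x ^ 2) :=
  if_neg (not_or.2 ⟨h₁, h₂⟩)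

theorem Kker_pi_div_two : Kker (π / 2) = 1 / (2 * π) := if_pos (Or.inl rfl)

theorem Kker_neg_pi_div_two : Kker (-(π / 2)) = 1 / (2 * π) := if_pos (Or.inr rfl)

theorem Kker_eq_of_mem_Ioo (hx : x ∈ Ioo (-(π / 2)) (π / 2)) :
    Kker x = 2 * cos x / (π ^ 2 - 4 * x ^ 2) :=
  Kker_of_ne hx.2.ne hx.1.ne'

theorem sq_pi_sub_four_mul_sq_pos (hx : x ∈ Ioo (-(π / 2)) (π / 2)) :
    0 < π ^ 2 - 4 * x ^ 2 := by
  nlinarith [hx.1, hx.2, pi_pos]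

theorem Kker_pos (hx : x ∈ Ioo (-(π / 2)) (π / 2)) : 0 < Kker x := by
  rw [Kker_eq_of_mem_Ioo hx]
  have := cos_pos_of_mem_Ioo hx
  have := sq_pi_sub_four_mul_sq_pos hx
  positivity

theorem Kker_nonneg (hx : x ∈ J) : 0 ≤ Kker x := by
  rcases eq_endpoints_or_mem_Ioo_of_mem_Icc hx with rfl | rfl | hx
  · rw [Kker_neg_pi_div_two]; positivity
  · rw [Kker_pi_div_two]; positivity
  · exact (Kker_pos hx).le

theorem Kker_le (hx : x ∈ J) : Kker x ≤ 1 / π := by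
  have hπ := pi_pos
  rcases eq_endpoints_or_mem_Ioo_of_mem_Icc hx with rfl | rfl | hx'
  · rw [Kker_neg_pi_div_two]; gcongr; linarith
  · rw [Kker_pi_div_two]; gcongr; linarith
  rw [Kker_eq_of_mem_Ioo hx', div_le_div_iff₀ (sq_pi_sub_four_mul_sq_pos hx') hπ]
  have habs : |x| ≤ π / 2 := abs_le.2 hx
  have hcos : cos x ≤ π / 2 - |x| := by
    rw [← cos_abs, ← sin_pi_div_two_sub]
    exact sin_le (by linarith)
  nlinarith [abs_nonneg x, sq_abs x]

theorem measurable_Kker : Measurable Kker :=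
  Measurable.ite ((measurableSet_singleton _).union (measurableSet_singleton _))
    measurable_const (by fun_prop)

theorem integrableOn_Kker : IntegrableOn Kker J :=
  Measure.integrableOn_of_bounded (M := 1 / π) measure_Icc_lt_top.ne
    measurable_Kker.aestronglyMeasurable
    ((ae_restrict_iff' measurableSet_Icc).2 (ae_of_all _ fun x hx => by
      rw [Real.norm_of_nonneg (Kker_nonneg hx)]; exact Kker_le hx))

theorem intervalIntegrable_mul_Kker {g : ℝ → ℝ} (hg : ContinuousOn g J) :
    IntervalIntegrable (fun x => g x * Kker x) volume (-(π / 2)) (π / 2) :=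
  (intervalIntegrable_iff_integrableOn_Icc_of_le neg_pi_div_two_le_pi_div_two).2
    (integrableOn_Kker.continuousOn_mul hg isCompact_Icc)

end Kernel

section ShiftedKernel

variable {N : ℕ} {x : ℝ}

theorem three_pi_div_two_le_add_mul_pi (hN : 2 ≤ N) (hx : x ∈ J) : 3 * π / 2 ≤ x + N * π := by
  have : (2 : ℝ) ≤ N := by exact_mod_cast hN
  nlinarith [hx.1, pi_pos]

theorem sq_pi_sub_four_mul_sq_add_mul_pi_neg (hN : 2 ≤ N) (hx : x ∈ J) :
    π ^ 2 - 4 * (x + N * π) ^ 2 < 0 := by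
  nlinarith [three_pi_div_two_le_add_mul_pi hN hx, pi_pos]

theorem Kker_add_mul_pi (hN : 2 ≤ N) (hNe : Even N) (hx : x ∈ J) :
    Kker (x + N * π) = 2 * cos x / (π ^ 2 - 4 * (x + N * π) ^ 2) := by
  have h := three_pi_div_two_le_add_mul_pi hN hx
  rw [Kker_of_ne (by linarith [pi_pos]) (by linarith [pi_pos])]
  obtain ⟨k, rfl⟩ := hNe
  rw [show ((k + k : ℕ) : ℝ) * π = k * (2 * π) by push_cast; ring, cos_add_nat_mul_two_pi]

theorem Kker_add_mul_pi_nonpos (hN : 2 ≤ N) (hNe : Even N) (hx : x ∈ J) :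
    Kker (x + N * π) ≤ 0 := by
  rw [Kker_add_mul_pi hN hNe hx]
  exact div_nonpos_of_nonneg_of_nonpos (by linarith [cos_nonneg_of_mem_Icc hx])
    (sq_pi_sub_four_mul_sq_add_mul_pi_neg hN hx).le

theorem Kker_add_mul_pi_of_cos_eq_zero (hN : 2 ≤ N) (hNe : Even N) (hx : x ∈ J)
    (hcos : cos x = 0) : Kker (x + N * π) = 0 := by
  rw [Kker_add_mul_pi hN hNe hx, hcos, mul_zero, zero_div]

theorem intervalIntegrable_mul_Kker_add_mul_pi (hN : 2 ≤ N) (hNe : Even N) {g : ℝ → ℝ}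
    (hg : ContinuousOn g J) :
    IntervalIntegrable (fun x => g x * Kker (x + N * π)) volume (-(π / 2)) (π / 2) := by
  have hK : ContinuousOn (fun x => Kker (x + N * π)) J :=
    ContinuousOn.congr (ContinuousOn.div (by fun_prop) (by fun_prop)
      fun x hx => (sq_pi_sub_four_mul_sq_add_mul_pi_neg hN hx).ne)
      fun x hx => Kker_add_mul_pi hN hNe hx
  refine ContinuousOn.intervalIntegrable ?_
  rw [uIcc_of_le neg_pi_div_two_le_pi_div_two]
  exact hg.mul hK

end ShiftedKernel

section Tent

def tent (h c x : ℝ) : ℝ := h - |x - c|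

theorem continuous_tent (h c : ℝ) : Continuous (tent h c) := by
  unfold tent; fun_prop

theorem upperPointedZigZag_tent {h c : ℝ} (hc : c ∈ J) : UpperPointedZigZag (tent h c) := by
  refine ⟨c, hc, fun x hx => ?_, fun x hx => ?_⟩
  · simp only [tent, sub_self, abs_zero, abs_of_nonpos (sub_nonpos.2 hx.2)]; ring
  · simp only [tent, sub_self, abs_zero, abs_of_nonneg (sub_nonneg.2 hx.1)]; ring

theorem UpperPointedZigZag.exists_eqOn_tent {z : ℝ → ℝ} (hz : UpperPointedZigZag z) :
    ∃ c ∈ J, EqOn z (tent (z c) c) J := by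
  obtain ⟨c, hc, hleft, hright⟩ := hz
  refine ⟨c, hc, fun x hx => ?_⟩
  rcases le_total x c with hxc | hxc
  · rw [hleft x ⟨hx.1, hxc⟩, tent, abs_of_nonpos (sub_nonpos.2 hxc)]; ring
  · rw [hright x ⟨hxc, hx.2⟩, tent, abs_of_nonneg (sub_nonneg.2 hxc)]; ring

/-- The apex abscissa of the tent through `(p, f p)` and `(q, f q)`. -/
noncomputable def tentCenter (f : ℝ → ℝ) (p q : ℝ) : ℝ := (p + q + f q - f p) / 2

noncomputable def tentThrough (f : ℝ → ℝ) (p q : ℝ) : ℝ → ℝ :=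
  tent (f p + tentCenter f p q - p) (tentCenter f p q)

theorem tentThrough_self (f : ℝ → ℝ) (p : ℝ) : tentThrough f p p = tent (f p) p := by
  simp only [tentThrough, tentCenter]; ring_nf

variable {f : ℝ → ℝ} {S : Set ℝ} {p q x : ℝ}

theorem tent_le (hf : LipschitzOnWith 1 f S) (hp : p ∈ S) (hx : x ∈ S) : tent (f p) p x ≤ f x := by
  have := hf.le_add_abs_sub hp hx
  rw [tent, abs_sub_comm]; linarith

theorem tentCenter_mem_Icc (hf : LipschitzOnWith 1 f S) (hp : p ∈ S) (hq : q ∈ S) (hpq : p ≤ q) :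
    tentCenter f p q ∈ Icc p q := by
  have h₁ := hf.le_add_abs_sub hp hq
  have h₂ := hf.le_add_abs_sub hq hp
  rw [abs_of_nonpos (sub_nonpos.2 hpq)] at h₁
  rw [abs_of_nonneg (sub_nonneg.2 hpq)] at h₂
  constructor <;> (unfold tentCenter; linarith)

theorem le_tent_of_tentCenter_le (hf : LipschitzOnWith 1 f S) (hp : p ∈ S) (hq : q ∈ S)
    (hx : x ∈ S) (hpx : p ≤ x) (hxq : x ≤ q) {c : ℝ} (hc : tentCenter f p q ≤ c) :
    f x ≤ tent (f p + c - p) c x := by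
  have h₁ := hf.le_add_abs_sub hx hp
  have h₂ := hf.le_add_abs_sub hx hq
  rw [abs_of_nonneg (sub_nonneg.2 hpx)] at h₁
  rw [abs_of_nonpos (sub_nonpos.2 hxq)] at h₂
  unfold tentCenter at hc
  rcases le_total x c with hxc | hxc
  · rw [tent, abs_of_nonpos (sub_nonpos.2 hxc)]; linarith
  · rw [tent, abs_of_nonneg (sub_nonneg.2 hxc)]; linarith

theorem le_tentThrough (hf : LipschitzOnWith 1 f S) (hp : p ∈ S) (hq : q ∈ S)
    (hx : x ∈ S) (hpx : p ≤ x) (hxq : x ≤ q) : f x ≤ tentThrough f p q x :=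
  le_tent_of_tentCenter_le hf hp hq hx hpx hxq le_rfl

theorem tentThrough_le_of_le_left (hf : LipschitzOnWith 1 f S) (hp : p ∈ S) (hq : q ∈ S)
    (hpq : p ≤ q) (hx : x ∈ S) (hxp : x ≤ p) : tentThrough f p q x ≤ f x := by
  have hc := (tentCenter_mem_Icc hf hp hq hpq).1
  have h := hf.le_add_abs_sub hp hx
  rw [abs_of_nonneg (sub_nonneg.2 hxp)] at h
  rw [tentThrough, tent, abs_of_nonpos (by linarith)]
  linarith

theorem tentThrough_le_of_right_le (hf : LipschitzOnWith 1 f S) (hp : p ∈ S) (hq : q ∈ S)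
    (hpq : p ≤ q) (hx : x ∈ S) (hqx : q ≤ x) : tentThrough f p q x ≤ f x := by
  have hc := (tentCenter_mem_Icc hf hp hq hpq).2
  have h := hf.le_add_abs_sub hq hx
  rw [abs_of_nonpos (sub_nonpos.2 hqx)] at h
  rw [tentThrough, tent, abs_of_nonneg (by linarith)]
  unfold tentCenter
  linarith

theorem upperPointedZigZag_tentThrough (hf : LipschitzOnWith 1 f J) (hp : p ∈ J) (hq : q ∈ J)
    (hpq : p ≤ q) : UpperPointedZigZag (tentThrough f p q) :=
  have hc := tentCenter_mem_Icc hf hp hq hpq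
  upperPointedZigZag_tent ⟨hp.1.trans hc.1, hc.2.trans hq.2⟩

end Tent

section TentIntegral

noncomputable def kernelMass : ℝ := ∫ x in -(π / 2)..π / 2, Kker x

noncomputable def absMoment (c : ℝ) : ℝ := ∫ x in -(π / 2)..π / 2, |x - c| * Kker x

theorem kernelMass_pos : 0 < kernelMass :=
  intervalIntegral_pos_of_pos_on
    (by simpa using intervalIntegrable_mul_Kker (g := fun _ => 1) continuousOn_const)
    (fun _ hx => Kker_pos hx) (by linarith [pi_pos])

theorem intervalIntegrable_abs_sub_mul_Kker (c : ℝ) :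
    IntervalIntegrable (fun x => |x - c| * Kker x) volume (-(π / 2)) (π / 2) :=
  intervalIntegrable_mul_Kker (by fun_prop)

theorem integral_tent_mul_Kker (h c : ℝ) :
    ∫ x in -(π / 2)..π / 2, tent h c x * Kker x = h * kernelMass - absMoment c := by
  simp only [tent, sub_mul]
  rw [integral_sub (intervalIntegrable_mul_Kker continuousOn_const)
    (intervalIntegrable_abs_sub_mul_Kker c), intervalIntegral.integral_const_mul, kernelMass,
    absMoment]

theorem abs_absMoment_sub_le (c d : ℝ) :
    |absMoment c - absMoment d| ≤ |c - d| * kernelMass := by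
  rw [absMoment, absMoment, ← integral_sub (intervalIntegrable_abs_sub_mul_Kker c)
    (intervalIntegrable_abs_sub_mul_Kker d), kernelMass, ← intervalIntegral.integral_const_mul]
  rw [← Real.norm_eq_abs]
  refine norm_integral_le_of_norm_le neg_pi_div_two_le_pi_div_two (ae_of_all _ fun x hx => ?_)
    (intervalIntegrable_mul_Kker continuousOn_const)
  have hK := Kker_nonneg (Ioc_subset_Icc_self hx)
  rw [← sub_mul, Real.norm_eq_abs, abs_mul, abs_of_nonneg hK]
  refine mul_le_mul_of_nonneg_right ?_ hK
  simpa [abs_sub_comm d c] using abs_abs_sub_abs_le_abs_sub (x - c) (x - d)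

theorem continuous_absMoment : Continuous absMoment :=
  (LipschitzWith.of_dist_le' (K := kernelMass) fun c d => by
    rw [Real.dist_eq, Real.dist_eq, mul_comm]; exact abs_absMoment_sub_le c d).continuous

theorem ContinuousOn.integral_tent_mul_Kker {h c : ℝ → ℝ} {s : Set ℝ} (hh : ContinuousOn h s)
    (hc : ContinuousOn c s) :
    ContinuousOn (fun t => ∫ x in -(π / 2)..π / 2, tent (h t) (c t) x * Kker x) s := by
  simp only [ZigZagReduction.integral_tent_mul_Kker]
  exact (hh.mul continuousOn_const).sub (continuous_absMoment.comp_continuousOn hc)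

end TentIntegral

section Multiplier

variable {n l : ℝ}

noncomputable def multiplierDiscr (n l : ℝ) : ℝ := (1 + l) ^ 2 - 4 * n ^ 2 * l

/-- The smaller root of `multiplierDiscr n`; the larger one is `(n + √(n ^ 2 - 1)) ^ 2`. -/
noncomputable def maxMultiplier (n : ℝ) : ℝ := (n - √(n ^ 2 - 1)) ^ 2

noncomputable def lowerRoot (n l : ℝ) : ℝ :=
  -(π * (2 * n * l + √(multiplierDiscr n l)) / (2 * (1 + l)))

noncomputable def upperRoot (n l : ℝ) : ℝ :=
  π * (√(multiplierDiscr n l) - 2 * n * l) / (2 * (1 + l))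

theorem multiplierDiscr_eq (hn : 1 ≤ n) (l : ℝ) :
    multiplierDiscr n l = (l - (n - √(n ^ 2 - 1)) ^ 2) * (l - (n + √(n ^ 2 - 1)) ^ 2) := by
  have hr := sq_sqrt (show 0 ≤ n ^ 2 - 1 by nlinarith)
  unfold multiplierDiscr
  linear_combination (2 * l + n ^ 2 - √(n ^ 2 - 1) ^ 2 + 1) * hr

theorem multiplierDiscr_nonneg (hn : 1 ≤ n) (hl : l ≤ maxMultiplier n) :
    0 ≤ multiplierDiscr n l := by
  have hr := sqrt_nonneg (n ^ 2 - 1)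
  have hlM : l ≤ (n - √(n ^ 2 - 1)) ^ 2 := hl
  rw [multiplierDiscr_eq hn]
  exact mul_nonneg_of_nonpos_of_nonpos (by linarith) (by nlinarith)

theorem multiplierDiscr_maxMultiplier (hn : 1 ≤ n) : multiplierDiscr n (maxMultiplier n) = 0 := by
  rw [multiplierDiscr_eq hn, maxMultiplier, sub_self, zero_mul]

theorem two_mul_mul_le_one_add (hn : 1 ≤ n) (hl : l ≤ maxMultiplier n) :
    2 * n * l ≤ 1 + l := by
  have hr := sq_sqrt (show 0 ≤ n ^ 2 - 1 by nlinarith)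
  have hr₀ := sqrt_nonneg (n ^ 2 - 1)
  have hprod : (n + √(n ^ 2 - 1)) ^ 2 * maxMultiplier n = 1 := by
    unfold maxMultiplier; linear_combination (-(n ^ 2 - √(n ^ 2 - 1) ^ 2) - 1) * hr
  have hle : 2 * n - 1 ≤ (n + √(n ^ 2 - 1)) ^ 2 := by nlinarith
  nlinarith [mul_le_mul_of_nonneg_left hl (show 0 ≤ 2 * n - 1 by linarith),
    mul_le_mul_of_nonneg_right hle (show 0 ≤ maxMultiplier n by unfold maxMultiplier; positivity)]

theorem neg_pi_div_two_le_lowerRoot (hn : 1 ≤ n) (hl : l ∈ Icc 0 (maxMultiplier n)) :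
    -(π / 2) ≤ lowerRoot n l := by
  have hl₀ := hl.1
  have hsqrt : √(multiplierDiscr n l) ≤ 1 + l - 2 * n * l := by
    rw [sqrt_le_left (by linarith [two_mul_mul_le_one_add hn hl.2]), multiplierDiscr]
    nlinarith [mul_nonneg (mul_nonneg hl₀ (sub_nonneg.2 hn)) (show 0 ≤ 1 + l by linarith)]
  rw [lowerRoot, neg_le_neg_iff, div_le_iff₀ (by linarith)]
  nlinarith [pi_pos]

theorem upperRoot_le_pi_div_two (hn : 0 ≤ n) (hl : 0 ≤ l) : upperRoot n l ≤ π / 2 := by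
  have hsqrt : √(multiplierDiscr n l) ≤ 1 + l := by
    rw [sqrt_le_left (by linarith), multiplierDiscr]
    nlinarith [mul_nonneg (sq_nonneg n) hl]
  rw [upperRoot, div_le_iff₀ (by linarith)]
  nlinarith [pi_pos, mul_nonneg hn hl]

theorem lowerRoot_le_upperRoot (hl : 0 ≤ l) : lowerRoot n l ≤ upperRoot n l := by
  rw [lowerRoot, upperRoot, ← neg_div, div_le_div_iff_of_pos_right (by linarith)]
  nlinarith [pi_pos, sqrt_nonneg (multiplierDiscr n l)]

theorem lowerRoot_zero (n : ℝ) : lowerRoot n 0 = -(π / 2) := by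
  simp [lowerRoot, multiplierDiscr]

theorem upperRoot_zero (n : ℝ) : upperRoot n 0 = π / 2 := by
  simp [upperRoot, multiplierDiscr]

theorem upperRoot_maxMultiplier (hn : 1 ≤ n) :
    upperRoot n (maxMultiplier n) = lowerRoot n (maxMultiplier n) := by
  rw [upperRoot, lowerRoot, multiplierDiscr_maxMultiplier hn, sqrt_zero]
  ring

theorem continuousOn_lowerRoot (n : ℝ) : ContinuousOn (lowerRoot n) (Ici 0) := by
  unfold lowerRoot multiplierDiscr
  exact (ContinuousOn.div (by fun_prop) (by fun_prop) fun l hl => by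
    have : (0 : ℝ) ≤ l := hl; positivity).neg

theorem continuousOn_upperRoot (n : ℝ) : ContinuousOn (upperRoot n) (Ici 0) := by
  unfold upperRoot multiplierDiscr
  exact ContinuousOn.div (by fun_prop) (by fun_prop) fun l hl => by
    have : (0 : ℝ) ≤ l := hl; positivity

/-- The numerator of `-K(x + nπ) - l K(x)` over the common denominator
`(4 (x + nπ)² - π²) (π² - 4 x²)`, factored through its roots. -/
theorem weightNumerator_eq (hn : 1 ≤ n) (hl : l ∈ Icc 0 (maxMultiplier n)) (x : ℝ) :
    (π ^ 2 - 4 * x ^ 2) - l * (4 * (x + n * π) ^ 2 - π ^ 2)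
      = 4 * (1 + l) * ((x - lowerRoot n l) * (upperRoot n l - x)) := by
  have hl₀ : 1 + l ≠ 0 := by linarith [hl.1]
  have hd := sq_sqrt (multiplierDiscr_nonneg hn hl.2)
  rw [lowerRoot, upperRoot]
  field_simp
  rw [multiplierDiscr] at hd ⊢
  linear_combination (-4 * π ^ 2) * hd

end Multiplier

section Weight

variable {N : ℕ} {l x : ℝ}

/-- Minus the density of the Lagrangian `∫ f K(· + Nπ) + l ∫ f K`. -/
noncomputable def lagrangeWeight (N : ℕ) (l x : ℝ) : ℝ := -Kker (x + N * π) - l * Kker x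

theorem exists_pos_lagrangeWeight_eq (hN : 2 ≤ N) (hNe : Even N)
    (hl : l ∈ Icc 0 (maxMultiplier N)) (hx : x ∈ Ioo (-(π / 2)) (π / 2)) :
    ∃ c > 0, lagrangeWeight N l x = c * ((x - lowerRoot N l) * (upperRoot N l - x)) := by
  have hn : (1 : ℝ) ≤ N := by exact_mod_cast (show 1 ≤ N by omega)
  have hA := sq_pi_sub_four_mul_sq_pos hx
  have hB : 0 < 4 * (x + N * π) ^ 2 - π ^ 2 := by
    linarith [sq_pi_sub_four_mul_sq_add_mul_pi_neg hN (Ioo_subset_Icc_self hx)]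
  have hcos := cos_pos_of_mem_Ioo hx
  have hl₀ : 0 ≤ l := hl.1
  refine ⟨8 * (1 + l) * cos x / ((4 * (x + N * π) ^ 2 - π ^ 2) * (π ^ 2 - 4 * x ^ 2)),
    by positivity, ?_⟩
  have hQ := weightNumerator_eq hn hl x
  rw [lagrangeWeight, Kker_add_mul_pi hN hNe (Ioo_subset_Icc_self hx), Kker_eq_of_mem_Ioo hx,
    show π ^ 2 - 4 * (x + N * π) ^ 2 = -(4 * (x + N * π) ^ 2 - π ^ 2) by ring]
  generalize 4 * (x + N * π) ^ 2 - π ^ 2 = B at hB hQ ⊢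
  generalize π ^ 2 - 4 * x ^ 2 = A at hA hQ ⊢
  field_simp
  linear_combination 2 * hQ

theorem lagrangeWeight_nonneg (hN : 2 ≤ N) (hNe : Even N) (hl : l ∈ Icc 0 (maxMultiplier N))
    (hx : x ∈ Ioo (lowerRoot N l) (upperRoot N l)) : 0 ≤ lagrangeWeight N l x := by
  have hn : (1 : ℝ) ≤ N := by exact_mod_cast (show 1 ≤ N by omega)
  have hxJ : x ∈ Ioo (-(π / 2)) (π / 2) :=
    ⟨(neg_pi_div_two_le_lowerRoot hn hl).trans_lt hx.1,
      hx.2.trans_le (upperRoot_le_pi_div_two N.cast_nonneg hl.1)⟩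
  obtain ⟨c, hc, hW⟩ := exists_pos_lagrangeWeight_eq hN hNe hl hxJ
  rw [hW]
  exact mul_nonneg hc.le (mul_nonneg (sub_nonneg.2 hx.1.le) (sub_nonneg.2 hx.2.le))

theorem lagrangeWeight_nonpos (hN : 2 ≤ N) (hNe : Even N) (hl : l ∈ Icc 0 (maxMultiplier N))
    (hx : x ∈ J) (hout : x ≤ lowerRoot N l ∨ upperRoot N l ≤ x) : lagrangeWeight N l x ≤ 0 := by
  have hl₀ : 0 ≤ l := hl.1
  have hend : ∀ y ∈ J, cos y = 0 → Kker y = 1 / (2 * π) → lagrangeWeight N l y ≤ 0 :=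
    fun y hy hcos hK => by
      rw [lagrangeWeight, Kker_add_mul_pi_of_cos_eq_zero hN hNe hy hcos, hK]
      have : 0 ≤ l * (1 / (2 * π)) := by positivity
      linarith
  rcases eq_endpoints_or_mem_Ioo_of_mem_Icc hx with rfl | rfl | hx'
  · exact hend _ hx (by rw [cos_neg, cos_pi_div_two]) Kker_neg_pi_div_two
  · exact hend _ hx cos_pi_div_two Kker_pi_div_two
  obtain ⟨c, hc, hW⟩ := exists_pos_lagrangeWeight_eq hN hNe hl hx'
  have h₁₂ := lowerRoot_le_upperRoot (n := N) hl₀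
  rw [hW]
  refine mul_nonpos_of_nonneg_of_nonpos hc.le ?_
  rcases hout with h | h
  · exact mul_nonpos_of_nonpos_of_nonneg (by linarith) (by linarith)
  · exact mul_nonpos_of_nonneg_of_nonpos (by linarith) (by linarith)

/-- The tent through the two sign changes of the weight lies above `f` exactly where the weight
is nonnegative. -/
theorem mul_lagrangeWeight_le_tentThrough {f : ℝ → ℝ} (hN : 2 ≤ N) (hNe : Even N)
    (hl : l ∈ Icc 0 (maxMultiplier N)) (hf : LipschitzOnWith 1 f J) (hx : x ∈ J) :
    f x * lagrangeWeight N l x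
      ≤ tentThrough f (lowerRoot N l) (upperRoot N l) x * lagrangeWeight N l x := by
  have hn : (1 : ℝ) ≤ N := by exact_mod_cast (show 1 ≤ N by omega)
  have h₁ := neg_pi_div_two_le_lowerRoot hn hl
  have h₂ := upperRoot_le_pi_div_two N.cast_nonneg hl.1
  have h₁₂ := lowerRoot_le_upperRoot (n := N) hl.1
  have hp : lowerRoot N l ∈ J := ⟨h₁, h₁₂.trans h₂⟩
  have hq : upperRoot N l ∈ J := ⟨h₁.trans h₁₂, h₂⟩
  by_cases hout : x ≤ lowerRoot N l ∨ upperRoot N l ≤ x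
  · refine mul_le_mul_of_nonpos_right ?_ (lagrangeWeight_nonpos hN hNe hl hx hout)
    rcases hout with h | h
    · exact tentThrough_le_of_le_left hf hp hq h₁₂ hx h
    · exact tentThrough_le_of_right_le hf hp hq h₁₂ hx h
  · push Not at hout
    exact mul_le_mul_of_nonneg_right (le_tentThrough hf hp hq hx hout.1.le hout.2.le)
      (lagrangeWeight_nonneg hN hNe hl hout)

theorem mul_lagrangeWeight (N : ℕ) (l : ℝ) (g : ℝ → ℝ) :
    (fun x => g x * lagrangeWeight N l x)
      = fun x => -(g x * Kker (x + N * π)) - l * (g x * Kker x) := by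
  ext x; rw [lagrangeWeight]; ring

theorem intervalIntegrable_mul_lagrangeWeight (hN : 2 ≤ N) (hNe : Even N) (l : ℝ) {g : ℝ → ℝ}
    (hg : ContinuousOn g J) :
    IntervalIntegrable (fun x => g x * lagrangeWeight N l x) volume (-(π / 2)) (π / 2) := by
  rw [mul_lagrangeWeight]
  exact (intervalIntegrable_mul_Kker_add_mul_pi hN hNe hg).neg.sub
    ((intervalIntegrable_mul_Kker hg).const_mul l)

theorem integral_mul_lagrangeWeight (hN : 2 ≤ N) (hNe : Even N) (l : ℝ) {g : ℝ → ℝ}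
    (hg : ContinuousOn g J) :
    ∫ x in -(π / 2)..π / 2, g x * lagrangeWeight N l x
      = -(∫ x in -(π / 2)..π / 2, g x * Kker (x + N * π))
        - l * ∫ x in -(π / 2)..π / 2, g x * Kker x := by
  have hneg : IntervalIntegrable (fun x => -(g x * Kker (x + N * π))) volume (-(π / 2)) (π / 2) :=
    (intervalIntegrable_mul_Kker_add_mul_pi hN hNe hg).neg
  rw [mul_lagrangeWeight, integral_sub hneg ((intervalIntegrable_mul_Kker hg).const_mul l),
    intervalIntegral.integral_neg, intervalIntegral.integral_const_mul]

/-- Weak duality for the multiplier `l`. -/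
theorem integral_mul_Kker_add_mul_pi_le {f z : ℝ → ℝ} (hN : 2 ≤ N) (hNe : Even N) (hl : 0 ≤ l)
    (hf : ContinuousOn f J) (hz : ContinuousOn z J)
    (hK : ∫ x in -(π / 2)..π / 2, f x * Kker x ≤ ∫ x in -(π / 2)..π / 2, z x * Kker x)
    (hW : ∀ x ∈ J, f x * lagrangeWeight N l x ≤ z x * lagrangeWeight N l x) :
    ∫ x in -(π / 2)..π / 2, z x * Kker (x + N * π)
      ≤ ∫ x in -(π / 2)..π / 2, f x * Kker (x + N * π) := by
  have h := integral_mono_on neg_pi_div_two_le_pi_div_two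
    (intervalIntegrable_mul_lagrangeWeight hN hNe l hf)
    (intervalIntegrable_mul_lagrangeWeight hN hNe l hz) hW
  rw [integral_mul_lagrangeWeight hN hNe l hf, integral_mul_lagrangeWeight hN hNe l hz] at h
  nlinarith [mul_le_mul_of_nonneg_left hK hl]

end Weight

section Construction

/-- `z` lies in the zig-zag class `B` for the data `I` and `s = f (-π/2)`, and does at least as
well as `f`. -/
def ZigZagImproves (N : ℕ) (I : ℝ) (f z : ℝ → ℝ) : Prop :=
  UpperPointedZigZag z ∧ z (-(π / 2)) ≤ f (-(π / 2)) ∧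
    ∫ x in -(π / 2)..π / 2, z x * Kker x = I ∧
    ∫ x in -(π / 2)..π / 2, z x * Kker (x + N * π)
      ≤ ∫ x in -(π / 2)..π / 2, f x * Kker (x + N * π)

variable {N : ℕ} {f : ℝ → ℝ} {I : ℝ}

theorem exists_tent_of_integral_tentThrough_le (hN : 2 ≤ N) (hNe : Even N)
    (hf : LipschitzOnWith 1 f J)
    (hupp : I ≤ ∫ x in -(π / 2)..π / 2, (f (-(π / 2)) + (x + π / 2)) * Kker x)
    (hI : ∫ x in -(π / 2)..π / 2, tentThrough f (-(π / 2)) (π / 2) x * Kker x ≤ I) :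
    ∃ z, ZigZagImproves N I f z := by
  have ha := left_mem_Icc.2 neg_pi_div_two_le_pi_div_two
  have hb := right_mem_Icc.2 neg_pi_div_two_le_pi_div_two
  have hc₀ := tentCenter_mem_Icc hf ha hb neg_pi_div_two_le_pi_div_two
  have hφ : ContinuousOn
      (fun c => ∫ x in -(π / 2)..π / 2, tent (f (-(π / 2)) + c - -(π / 2)) c x * Kker x)
      (Icc (tentCenter f (-(π / 2)) (π / 2)) (π / 2)) :=
    ContinuousOn.integral_tent_mul_Kker (by fun_prop) continuousOn_id
  have hφb : ∫ x in -(π / 2)..π / 2, tent (f (-(π / 2)) + π / 2 - -(π / 2)) (π / 2) x * Kker x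
      = ∫ x in -(π / 2)..π / 2, (f (-(π / 2)) + (x + π / 2)) * Kker x := by
    refine integral_congr fun x hx => ?_
    rw [uIcc_of_le neg_pi_div_two_le_pi_div_two] at hx
    simp only [tent, abs_of_nonpos (sub_nonpos.2 hx.2)]
    ring
  obtain ⟨c, hc, hcI⟩ := intermediate_value_Icc hc₀.2 hφ ⟨hI, hφb ▸ hupp⟩
  have hcJ : c ∈ J := ⟨hc₀.1.trans hc.1, hc.2⟩
  refine ⟨_, upperPointedZigZag_tent hcJ, ?_, hcI, ?_⟩
  · rw [tent, abs_of_nonpos (sub_nonpos.2 hcJ.1)]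
    linarith
  · refine integral_mono_on neg_pi_div_two_le_pi_div_two
      (intervalIntegrable_mul_Kker_add_mul_pi hN hNe (continuous_tent _ _).continuousOn)
      (intervalIntegrable_mul_Kker_add_mul_pi hN hNe hf.continuousOn) fun x hx => ?_
    exact mul_le_mul_of_nonpos_right (le_tent_of_tentCenter_le hf ha hb hx hx.1 hx.2 hc.1)
      (Kker_add_mul_pi_nonpos hN hNe hx)

theorem exists_tent_of_le_integral_tentThrough (hN : 2 ≤ N) (hNe : Even N)
    (hf : LipschitzOnWith 1 f J) (hfI : ∫ x in -(π / 2)..π / 2, f x * Kker x ≤ I)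
    (hI : I ≤ ∫ x in -(π / 2)..π / 2, tentThrough f (-(π / 2)) (π / 2) x * Kker x) :
    ∃ z, ZigZagImproves N I f z := by
  have hn : (1 : ℝ) ≤ N := by exact_mod_cast (show 1 ≤ N by omega)
  have hM : 0 ≤ maxMultiplier N := sq_nonneg _
  have hp : MapsTo (lowerRoot N) (Icc 0 (maxMultiplier N)) J := fun l hl =>
    ⟨neg_pi_div_two_le_lowerRoot hn hl,
      (lowerRoot_le_upperRoot hl.1).trans (upperRoot_le_pi_div_two N.cast_nonneg hl.1)⟩
  have hq : MapsTo (upperRoot N) (Icc 0 (maxMultiplier N)) J := fun l hl =>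
    ⟨(neg_pi_div_two_le_lowerRoot hn hl).trans (lowerRoot_le_upperRoot hl.1),
      upperRoot_le_pi_div_two N.cast_nonneg hl.1⟩
  have hpc : ContinuousOn (lowerRoot N) (Icc 0 (maxMultiplier N)) :=
    (continuousOn_lowerRoot _).mono Icc_subset_Ici_self
  have hqc : ContinuousOn (upperRoot N) (Icc 0 (maxMultiplier N)) :=
    (continuousOn_upperRoot _).mono Icc_subset_Ici_self
  have hfp : ContinuousOn (fun l => f (lowerRoot N l)) (Icc 0 (maxMultiplier N)) :=
    hf.continuousOn.comp hpc hp
  have hfq : ContinuousOn (fun l => f (upperRoot N l)) (Icc 0 (maxMultiplier N)) :=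
    hf.continuousOn.comp hqc hq
  have hcenter := (((hpc.add hqc).add hfq).sub hfp).div_const 2
  have hψ : ContinuousOn (fun l => ∫ x in -(π / 2)..π / 2,
      tentThrough f (lowerRoot N l) (upperRoot N l) x * Kker x) (Icc 0 (maxMultiplier N)) :=
    ContinuousOn.integral_tent_mul_Kker ((hfp.add hcenter).sub hpc) hcenter
  have hψ₀ : ∫ x in -(π / 2)..π / 2,
      tentThrough f (lowerRoot N 0) (upperRoot N 0) x * Kker x
        = ∫ x in -(π / 2)..π / 2, tentThrough f (-(π / 2)) (π / 2) x * Kker x := by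
    rw [lowerRoot_zero, upperRoot_zero]
  have hψM : ∫ x in -(π / 2)..π / 2,
      tentThrough f (lowerRoot N (maxMultiplier N)) (upperRoot N (maxMultiplier N)) x * Kker x
        ≤ I := by
    rw [upperRoot_maxMultiplier hn, tentThrough_self]
    refine le_trans (integral_mono_on neg_pi_div_two_le_pi_div_two
      (intervalIntegrable_mul_Kker (continuous_tent _ _).continuousOn)
      (intervalIntegrable_mul_Kker hf.continuousOn) fun x hx => ?_) hfI
    exact mul_le_mul_of_nonneg_right (tent_le hf (hp (right_mem_Icc.2 hM)) hx) (Kker_nonneg hx)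
  obtain ⟨l, hl, hlI⟩ := intermediate_value_Icc' hM hψ ⟨hψM, hψ₀ ▸ hI⟩
  have h₁₂ := lowerRoot_le_upperRoot (n := N) hl.1
  refine ⟨_, upperPointedZigZag_tentThrough hf (hp hl) (hq hl) h₁₂,
    tentThrough_le_of_le_left hf (hp hl) (hq hl) h₁₂ (left_mem_Icc.2 neg_pi_div_two_le_pi_div_two)
      (hp hl).1, hlI, ?_⟩
  exact integral_mul_Kker_add_mul_pi_le hN hNe hl.1 hf.continuousOn
    (continuous_tent _ _).continuousOn (hfI.trans hlI.ge)
    fun x hx => mul_lagrangeWeight_le_tentThrough hN hNe hl hf hx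

theorem exists_zigzag_integral_le (hN : 2 ≤ N) (hNe : Even N) (hf : LipschitzOnWith 1 f J)
    (hupp : I ≤ ∫ x in -(π / 2)..π / 2, (f (-(π / 2)) + (x + π / 2)) * Kker x)
    (hfI : ∫ x in -(π / 2)..π / 2, f x * Kker x ≤ I) :
    ∃ z, ZigZagImproves N I f z :=
  (le_total (∫ x in -(π / 2)..π / 2, tentThrough f (-(π / 2)) (π / 2) x * Kker x) I).elim
    (exists_tent_of_integral_tentThrough_le hN hNe hf hupp)
    (exists_tent_of_le_integral_tentThrough hN hNe hf hfI)

theorem bddBelow_integral_zigzag (hN : 2 ≤ N) (hNe : Even N) (I : ℝ) :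
    BddBelow ((fun z : ℝ → ℝ => ∫ x in -(π / 2)..π / 2, z x * Kker (x + N * π)) ''
      {z | UpperPointedZigZag z ∧ ∫ x in -(π / 2)..π / 2, z x * Kker x = I}) := by
  refine ⟨(I / kernelMass + π) * ∫ x in -(π / 2)..π / 2, Kker (x + N * π), ?_⟩
  rintro _ ⟨z, ⟨hz, hzI⟩, rfl⟩
  obtain ⟨c, hc, hzc⟩ := UpperPointedZigZag.exists_eqOn_tent hz
  have hzJ : ContinuousOn z J := (continuous_tent _ _).continuousOn.congr hzc
  have hdist : ∀ x ∈ J, |x - c| ≤ π := fun x hx =>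
    abs_le.2 ⟨by linarith [hx.1, hc.2], by linarith [hx.2, hc.1]⟩
  have hmass : (z c - π) * kernelMass ≤ I := by
    rw [kernelMass, ← intervalIntegral.integral_const_mul, ← hzI]
    refine integral_mono_on neg_pi_div_two_le_pi_div_two
      (intervalIntegrable_mul_Kker continuousOn_const) (intervalIntegrable_mul_Kker hzJ)
      fun x hx => mul_le_mul_of_nonneg_right ?_ (Kker_nonneg hx)
    rw [hzc hx, tent]
    linarith [hdist x hx]
  have hzc_le : z c ≤ I / kernelMass + π := by
    rw [← sub_le_iff_le_add, le_div_iff₀ kernelMass_pos]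
    exact hmass
  rw [← intervalIntegral.integral_const_mul]
  refine integral_mono_on neg_pi_div_two_le_pi_div_two
    (intervalIntegrable_mul_Kker_add_mul_pi hN hNe continuousOn_const)
    (intervalIntegrable_mul_Kker_add_mul_pi hN hNe hzJ)
    fun x hx => mul_le_mul_of_nonpos_right ?_ (Kker_add_mul_pi_nonpos hN hNe hx)
  rw [hzc hx, tent]
  linarith [abs_nonneg (x - c)]

end Construction

end ZigZagReduction

/-- **Lemma 3.6 of the paper**: reduction of 1-Lipschitz competitors to
upper pointed zig-zag functions.  For even `N ≥ 2` (so `K(x+Nπ) < 0` on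
`(−π/2,π/2)`), the infimum of `∫ f(x) K(x+Nπ) dx` over the class `A` is at
least the corresponding infimum over the zig-zag class `B`. -/
theorem lipschitz_to_zigzag_reduction
    (I s : ℝ) (N : ℕ) (hN : 2 ≤ N) (hNeven : N % 2 = 0)
    (hlow : (∫ x in (-(Real.pi / 2))..(Real.pi / 2),
        (s - (x + Real.pi / 2)) * Kker x) ≤ I)
    (hupp : I ≤ ∫ x in (-(Real.pi / 2))..(Real.pi / 2),
        (s + (x + Real.pi / 2)) * Kker x) :
    sInf ((fun z : ℝ → ℝ =>
        ∫ x in (-(Real.pi / 2))..(Real.pi / 2), z x * Kker (x + (N : ℝ) * Real.pi)) ''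
      {z : ℝ → ℝ | UpperPointedZigZag z ∧ z (-(Real.pi / 2)) ≤ s ∧
        (∫ x in (-(Real.pi / 2))..(Real.pi / 2), z x * Kker x) = I})
    ≤
    sInf ((fun f : ℝ → ℝ =>
        ∫ x in (-(Real.pi / 2))..(Real.pi / 2), f x * Kker (x + (N : ℝ) * Real.pi)) ''
      {f : ℝ → ℝ |
        (∀ x ∈ Set.Icc (-(Real.pi / 2)) (Real.pi / 2),
          ∀ y ∈ Set.Icc (-(Real.pi / 2)) (Real.pi / 2), |f x - f y| ≤ |x - y|) ∧
        f (-(Real.pi / 2)) = s ∧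
        (∫ x in (-(Real.pi / 2))..(Real.pi / 2), f x * Kker x) ≤ I}) := by
  have hNe : Even N := Nat.even_iff.2 hNeven
  refine le_csInf ⟨_, fun x => s - (x + π / 2), ⟨fun x _ y _ => ?_, by ring, hlow⟩, rfl⟩ ?_
  · rw [show s - (x + π / 2) - (s - (y + π / 2)) = -(x - y) by ring, abs_neg]
  rintro _ ⟨f, ⟨hf, rfl, hfI⟩, rfl⟩
  obtain ⟨z, hz, hza, hzI, hzf⟩ := ZigZagReduction.exists_zigzag_integral_le hN hNe
    (LipschitzOnWith.of_dist_le_mul fun x hx y hy => by simpa [Real.dist_eq] using hf x hx y hy)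
    hupp hfI
  refine le_trans (csInf_le ?_ ⟨z, ⟨hz, hza, hzI⟩, rfl⟩) hzf
  refine (ZigZagReduction.bddBelow_integral_zigzag hN hNe I).mono (image_mono ?_)
  exact fun z hz => ⟨hz.1, hz.2.2⟩
end

section
/- Define ρ : [0,∞) → ℝ by ρ(x) = 1 for x ∈ [0, π/2) and ρ(x) = (−1)^k for x ∈ [(2k−1)π/2, (2k+1)π/2) for each integer k ≥ 1. Then for every θ > 0: limsup_{x→∞} e^{−θx} | ∫₀ˣ e^{θu} ρ(u) du | = (e^{πθ} − 1) / (θ(1 + e^{πθ})). -/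
/-!
On `[node k, node (k + 1)]`, where `node k = (2k - 1)π/2` and `k ≥ 1`, the primitive
`F(x) = ∫₀ˣ e^{θu} ρ(u) du` equals `F(node k) + (-1)^k (e^{θx} - e^{θ node k}) / θ`.
For `M = (e^{πθ} - 1) / (θ (1 + e^{πθ}))` the quantity `F(node k) + (-1)^k M e^{θ node k}` is then a
constant `C` independent of `k`, so that `e^{-θx} (F(x) - C) = ±((1 - t)/θ - M t)` with
`t = e^{-θ(x - node k)} ∈ [e^{-πθ}, 1]`. This has absolute value at most `M`, with equality at the
nodes, while `e^{-θx} C → 0`.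
-/

open MeasureTheory Filter Real Set Topology

theorem Filter.limsup_eq_of_abs_sub_le {α : Type*} {l : Filter α} {f g e : α → ℝ} {M : ℝ}
    (he : Tendsto e l (𝓝 0)) (hfg : ∀ᶠ x in l, |f x - g x| ≤ e x)
    (hg : ∀ᶠ x in l, g x ≤ M) (hgM : ∃ᶠ x in l, g x = M) : limsup f l = M := by
  have hsmall : ∀ ε > 0, ∀ᶠ x in l, e x < ε := fun ε hε => he.eventually (gt_mem_nhds hε)
  have hupper : ∀ ε > 0, ∀ᶠ x in l, f x ≤ M + ε := fun ε hε => by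
    filter_upwards [hfg, hg, hsmall ε hε] with x h₁ h₂ h₃
    linarith [le_abs_self (f x - g x)]
  have hlower : ∀ ε > 0, ∃ᶠ x in l, M - ε ≤ f x := fun ε hε => by
    refine hgM.mp ?_
    filter_upwards [hfg, hsmall ε hε] with x h₁ h₂ h₃
    linarith [neg_abs_le (f x - g x)]
  have hbdd : IsBoundedUnder (· ≤ ·) l f := ⟨M + 1, hupper 1 one_pos⟩
  have hcobdd : IsCoboundedUnder (· ≤ ·) l f := .of_frequently_ge (hlower 1 one_pos)
  refine le_antisymm (le_of_forall_pos_le_add fun ε hε => ?_)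
    (le_of_forall_pos_le_add fun ε hε => ?_)
  · exact limsup_le_of_le hcobdd (hupper ε hε)
  · linarith [le_limsup_of_frequently_le (hlower ε hε) hbdd]

theorem intervalIntegral.integral_mul_eq_of_eqOn_Ico {a b x c : ℝ} {g ρ : ℝ → ℝ}
    (hρ : EqOn ρ (fun _ => c) (Ico a b)) (hax : a ≤ x) (hxb : x ≤ b) :
    ∫ u in a..x, g u * ρ u = c * ∫ u in a..x, g u := by
  rw [← intervalIntegral.integral_const_mul]
  refine intervalIntegral.integral_congr_Ioo_of_le hax fun u hu => ?_
  simp only [hρ ⟨hu.1.le, hu.2.trans_le hxb⟩, mul_comm]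

theorem IntervalIntegrable.mul_of_eqOn_Ico {a b c : ℝ} {g ρ : ℝ → ℝ}
    (hg : IntervalIntegrable g volume a b) (hρ : EqOn ρ (fun _ => c) (Ico a b)) (hab : a ≤ b) :
    IntervalIntegrable (fun u => g u * ρ u) volume a b :=
  (hg.mul_const c).congr_uIoo fun u hu => by
    rw [uIoo_of_le hab] at hu
    simp only [hρ (Ioo_subset_Ico_self hu)]

theorem integral_exp_mul {θ : ℝ} (hθ : θ ≠ 0) (a b : ℝ) :
    ∫ u in a..b, exp (θ * u) = (exp (θ * b) - exp (θ * a)) / θ := by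
  rw [intervalIntegral.integral_comp_mul_left exp hθ, integral_exp, smul_eq_mul, inv_mul_eq_div]

theorem abs_mul_abs_sub_abs_mul_sub_le (w a c : ℝ) (hw : 0 ≤ w) :
    |(w * |a| - |w * (a - c)|)| ≤ |c| * w :=
  calc |(w * |a| - |w * (a - c)|)| = |(|w * a| - |w * (a - c)|)| := by
        rw [abs_mul w a, abs_of_nonneg hw]
    _ ≤ |w * a - w * (a - c)| := abs_abs_sub_abs_le _ _
    _ = |c| * w := by rw [← mul_sub, sub_sub_cancel, abs_mul, abs_of_nonneg hw, mul_comm]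

namespace SquareWave

noncomputable def node (k : ℕ) : ℝ := k * π - π / 2

theorem node_succ (k : ℕ) : node (k + 1) = node k + π := by
  unfold node; push_cast; ring

theorem node_one : node 1 = π / 2 := by
  unfold node; push_cast; ring

theorem node_pos {k : ℕ} (hk : 1 ≤ k) : 0 < node k := by
  have : (1 : ℝ) ≤ k := by exact_mod_cast hk
  unfold node; nlinarith [pi_pos]

theorem tendsto_node : Tendsto node atTop atTop := by
  unfold node
  exact tendsto_atTop_add_const_right _ _ (tendsto_natCast_atTop_atTop.atTop_mul_const pi_pos)

theorem exists_mem_Icc_node {x : ℝ} (hx : node 1 ≤ x) :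
    ∃ k, 1 ≤ k ∧ x ∈ Icc (node k) (node (k + 1)) := by
  rw [node_one] at hx
  set y := x / π + 1 / 2
  have hxy : x = (y - 1 / 2) * π := by simp only [y]; field_simp; ring
  have hy : 1 ≤ y := by nlinarith [pi_pos]
  have hfloor := Nat.floor_le (zero_le_one.trans hy)
  have hfloor' := Nat.lt_floor_add_one y
  refine ⟨⌊y⌋₊, Nat.le_floor (by exact_mod_cast hy), ?_, ?_⟩ <;>
    simp only [node, hxy] <;> push_cast <;> nlinarith [pi_pos]

/-- The case `k = 0` is the initial interval `[0, π/2)`. -/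
def IsSquareWave (ρ : ℝ → ℝ) : Prop :=
  ∀ k : ℕ, ∀ x, 0 ≤ x → x ∈ Ico (node k) (node (k + 1)) → ρ x = (-1) ^ k

noncomputable def expPrimitive (θ : ℝ) (ρ : ℝ → ℝ) (x : ℝ) : ℝ :=
  ∫ u in (0 : ℝ)..x, exp (θ * u) * ρ u

noncomputable def amplitude (θ : ℝ) : ℝ :=
  (exp (π * θ) - 1) / (θ * (1 + exp (π * θ)))

theorem amplitude_mul {θ : ℝ} (hθ : 0 < θ) :
    amplitude θ * (θ * (1 + exp (π * θ))) = exp (π * θ) - 1 :=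
  div_mul_cancel₀ _ (by positivity)

theorem amplitude_nonneg {θ : ℝ} (hθ : 0 < θ) : 0 ≤ amplitude θ :=
  div_nonneg (sub_nonneg.2 (one_le_exp (by positivity))) (by positivity)

/-- The affine map `t ↦ (1 - t) / θ - M t` sends `1` to `-M` and `e^{-πθ}` to `M`. -/
theorem abs_sub_amplitude_mul_le {θ t : ℝ} (hθ : 0 < θ) (ht : t ∈ Icc (exp (-(π * θ))) 1) :
    |(1 - t) / θ - amplitude θ * t| ≤ amplitude θ := by
  set M := amplitude θ
  set q := exp (-(π * θ))
  have hq : q * exp (π * θ) = 1 := by rw [← exp_add]; simp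
  have hM : θ * M * (1 + q) = 1 - q := by
    linear_combination q * amplitude_mul hθ + (1 - θ * M) * hq
  have hM0 : 0 ≤ M := amplitude_nonneg hθ
  have hlow : (1 - t) / θ - M * t + M = (1 - t) * (θ⁻¹ + M) := by ring
  have hupp : M - ((1 - t) / θ - M * t) = (θ * M + 1) * (t - q) / θ := by
    field_simp; linear_combination hM
  rw [abs_le]
  constructor
  · have := mul_nonneg (sub_nonneg.2 ht.2) (add_nonneg (inv_nonneg.2 hθ.le) hM0)
    linarith
  · have := div_nonneg (mul_nonneg (by positivity : 0 ≤ θ * M + 1) (sub_nonneg.2 ht.1)) hθ.le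
    linarith

variable {ρ : ℝ → ℝ} {θ : ℝ}

theorem isSquareWave_of_eq_one_of_eq_neg_one_pow
    (hρ0 : ∀ x : ℝ, 0 ≤ x → x < π / 2 → ρ x = 1)
    (hρk : ∀ k : ℕ, 1 ≤ k → ∀ x : ℝ,
      (2 * (k : ℝ) - 1) * (π / 2) ≤ x → x < (2 * (k : ℝ) + 1) * (π / 2) → ρ x = (-1 : ℝ) ^ k) :
    IsSquareWave ρ := by
  rintro (_ | k) x hx ⟨hxk, hxk'⟩
  · exact hρ0 x hx (by simpa [node_one] using hxk')
  · refine hρk (k + 1) le_add_self x ?_ ?_ <;> simp only [node] at hxk hxk' <;>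
      push_cast at * <;> linarith

theorem IsSquareWave.eqOn_zero (hρ : IsSquareWave ρ) : EqOn ρ (fun _ => 1) (Ico 0 (node 1)) :=
  fun x hx => by simpa using hρ 0 x hx.1 ⟨by simp [node]; linarith [pi_pos, hx.1], hx.2⟩

theorem IsSquareWave.eqOn {k : ℕ} (hρ : IsSquareWave ρ) (hk : 1 ≤ k) :
    EqOn ρ (fun _ => (-1) ^ k) (Ico (node k) (node (k + 1))) :=
  fun x hx => hρ k x ((node_pos hk).le.trans hx.1) hx

theorem IsSquareWave.intervalIntegrable (hρ : IsSquareWave ρ) {k : ℕ} (hk : 1 ≤ k) :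
    IntervalIntegrable (fun u => exp (θ * u) * ρ u) volume 0 (node k) := by
  have hexp (a b : ℝ) : IntervalIntegrable (fun u => exp (θ * u)) volume a b := by
    apply Continuous.intervalIntegrable; fun_prop
  induction k, hk using Nat.le_induction with
  | base => exact (hexp _ _).mul_of_eqOn_Ico hρ.eqOn_zero (node_pos le_rfl).le
  | succ k hk ih =>
    have hle : node k ≤ node (k + 1) := by rw [node_succ]; linarith [pi_pos]
    exact ih.trans ((hexp _ _).mul_of_eqOn_Ico (hρ.eqOn hk) hle)

theorem IsSquareWave.expPrimitive_eq_add (hρ : IsSquareWave ρ) (hθ : θ ≠ 0) {k : ℕ} (hk : 1 ≤ k)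
    {x : ℝ} (hx : x ∈ Icc (node k) (node (k + 1))) :
    expPrimitive θ ρ x =
      expPrimitive θ ρ (node k) + (-1) ^ k * (exp (θ * x) - exp (θ * node k)) / θ := by
  have hexp : IntervalIntegrable (fun u => exp (θ * u)) volume (node k) x := by
    apply Continuous.intervalIntegrable; fun_prop
  have hint := hexp.mul_of_eqOn_Ico ((hρ.eqOn hk).mono (Ico_subset_Ico_right hx.2)) hx.1
  rw [expPrimitive, expPrimitive,
    ← intervalIntegral.integral_add_adjacent_intervals (hρ.intervalIntegrable hk) hint,
    intervalIntegral.integral_mul_eq_of_eqOn_Ico (hρ.eqOn hk) hx.1 hx.2, integral_exp_mul hθ,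
    mul_div_assoc]

noncomputable def offset (θ : ℝ) (ρ : ℝ → ℝ) (k : ℕ) : ℝ :=
  expPrimitive θ ρ (node k) + (-1) ^ k * amplitude θ * exp (θ * node k)

theorem IsSquareWave.offset_succ (hρ : IsSquareWave ρ) (hθ : 0 < θ) {k : ℕ} (hk : 1 ≤ k) :
    offset θ ρ (k + 1) = offset θ ρ k := by
  have hle : node k ≤ node (k + 1) := by rw [node_succ]; linarith [pi_pos]
  have hstep := hρ.expPrimitive_eq_add hθ.ne' hk (right_mem_Icc.2 hle)
  have hexp : exp (θ * node (k + 1)) = exp (π * θ) * exp (θ * node k) := by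
    rw [← exp_add, node_succ]; ring_nf
  rw [offset, offset, hstep, hexp]
  field_simp
  linear_combination -(-1) ^ k * exp (θ * node k) * amplitude_mul hθ

theorem IsSquareWave.offset_eq_offset_one (hρ : IsSquareWave ρ) (hθ : 0 < θ) {k : ℕ}
    (hk : 1 ≤ k) :
    offset θ ρ k = offset θ ρ 1 := by
  induction k, hk using Nat.le_induction with
  | base => rfl
  | succ k hk ih => rw [hρ.offset_succ hθ hk, ih]

theorem IsSquareWave.exp_mul_sub_offset (hρ : IsSquareWave ρ) (hθ : 0 < θ) {k : ℕ} (hk : 1 ≤ k)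
    {x : ℝ} (hx : x ∈ Icc (node k) (node (k + 1))) :
    exp (-(θ * x)) * (expPrimitive θ ρ x - offset θ ρ 1) =
      (-1) ^ k *
        ((1 - exp (-(θ * (x - node k)))) / θ - amplitude θ * exp (-(θ * (x - node k)))) := by
  have hw : exp (-(θ * x)) * exp (θ * x) = 1 := by rw [← exp_add]; simp
  have ht : exp (-(θ * (x - node k))) = exp (-(θ * x)) * exp (θ * node k) := by
    rw [← exp_add]; ring_nf
  rw [← hρ.offset_eq_offset_one hθ hk, offset, hρ.expPrimitive_eq_add hθ.ne' hk hx, ht]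
  field_simp
  linear_combination (-1) ^ k * hw

theorem IsSquareWave.abs_exp_mul_sub_offset_le (hρ : IsSquareWave ρ) (hθ : 0 < θ) {x : ℝ}
    (hx : node 1 ≤ x) :
    |exp (-(θ * x)) * (expPrimitive θ ρ x - offset θ ρ 1)| ≤ amplitude θ := by
  obtain ⟨k, hk, hxk⟩ := exists_mem_Icc_node hx
  rw [hρ.exp_mul_sub_offset hθ hk hxk, abs_mul, abs_pow, abs_neg, abs_one, one_pow, one_mul]
  refine abs_sub_amplitude_mul_le hθ ⟨exp_le_exp.2 ?_, exp_le_one_iff.2 ?_⟩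
  · have := hxk.2; rw [node_succ] at this; nlinarith
  · nlinarith [hxk.1]

theorem IsSquareWave.abs_exp_mul_sub_offset_node (hρ : IsSquareWave ρ) (hθ : 0 < θ) {k : ℕ}
    (hk : 1 ≤ k) :
    |exp (-(θ * node k)) * (expPrimitive θ ρ (node k) - offset θ ρ 1)| = amplitude θ := by
  rw [hρ.exp_mul_sub_offset hθ hk (left_mem_Icc.2 (by rw [node_succ]; linarith [pi_pos]))]
  simp [abs_of_nonneg (amplitude_nonneg hθ)]

end SquareWave

/-- **The computation from the Remark after Theorem 4.2 of the paper**: for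
the square-wave `ρ = τ'` attached to the extremal zig-zag example, for every
`θ > 0`,
`limsup_{x→∞} e^{−θx} |∫₀ˣ e^{θu} ρ(u) du| = (e^{πθ} − 1)/(θ(1 + e^{πθ}))`. -/
theorem extremal_square_wave_exponential_average
    (ρ : ℝ → ℝ)
    (hρ0 : ∀ x : ℝ, 0 ≤ x → x < Real.pi / 2 → ρ x = 1)
    (hρk : ∀ k : ℕ, 1 ≤ k → ∀ x : ℝ,
      (2 * (k : ℝ) - 1) * (Real.pi / 2) ≤ x → x < (2 * (k : ℝ) + 1) * (Real.pi / 2) →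
      ρ x = (-1 : ℝ) ^ k) :
    ∀ θ : ℝ, 0 < θ →
      Filter.limsup
        (fun x : ℝ => Real.exp (-(θ * x)) * |∫ u in (0:ℝ)..x, Real.exp (θ * u) * ρ u|)
        atTop
      = (Real.exp (Real.pi * θ) - 1) / (θ * (1 + Real.exp (Real.pi * θ))) := by
  intro θ hθ
  have hρ := SquareWave.isSquareWave_of_eq_one_of_eq_neg_one_pow hρ0 hρk
  set C := SquareWave.offset θ ρ 1
  refine limsup_eq_of_abs_sub_le
    (g := fun x => |exp (-(θ * x)) * (SquareWave.expPrimitive θ ρ x - C)|)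
    (e := fun x => |C| * exp (-(θ * x))) ?_
    (.of_forall fun x => abs_mul_abs_sub_abs_mul_sub_le _ _ _ (exp_pos _).le) ?_ ?_
  · simpa using ((tendsto_exp_neg_atTop_nhds_zero.comp
      (tendsto_id.const_mul_atTop hθ)).const_mul |C|)
  · filter_upwards [eventually_ge_atTop (SquareWave.node 1)] with x hx
    using hρ.abs_exp_mul_sub_offset_le hθ hx
  · exact SquareWave.tendsto_node.frequently
      ((eventually_ge_atTop 1).mono fun k hk => hρ.abs_exp_mul_sub_offset_node hθ hk).frequently
end
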